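/- arXiv:1505.03318 — 4 statements merged into one kernel-verified Lean document; each statement's English description precedes it below -/
import Mathlib

section
/- Let f : I ⊆ (0,∞) → ℝ be GA-convex on [a,b] ⊆ I with a < b, and f ∈ L¹[a,b]. Then for θ > 0: f(√(ab)) ≤ Γ(θ+1)/(2 (ln(b/a))^θ) · (J^θ_{a+}f(b) + J^θ_{b−}f(a)) ≤ (f(a)+f(b))/2, where J^θ_{a+}f(x) = (1/Γ(θ)) ∫ₐˣ (ln(x/t))^{θ−1} f(t) dt/t and J^θ_{b−}f(x) = (1/Γ(θ)) ∫ₓᵇ (ln(t/x))^{θ−1} f(t) dt/t are the Hadamard fractional integrals. -/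
open MeasureTheory intervalIntegral Set

noncomputable def betaR (x y : ℝ) : ℝ := Real.Gamma x * Real.Gamma y / Real.Gamma (x + y)

/-- Left-sided Hadamard fractional integral `J_{c+}^θ f (x)` (for `c < x`). -/
noncomputable def Jplus (θ : ℝ) (f : ℝ → ℝ) (c x : ℝ) : ℝ :=
  (1 / Real.Gamma θ) * ∫ t in c..x, (Real.log (x / t)) ^ (θ - 1) * f t / t

/-- Right-sided Hadamard fractional integral `J_{c-}^θ f (x)` (for `x < c`). -/
noncomputable def Jminus (θ : ℝ) (f : ℝ → ℝ) (c x : ℝ) : ℝ :=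
  (1 / Real.Gamma θ) * ∫ t in x..c, (Real.log (t / x)) ^ (θ - 1) * f t / t

/-- GA-convexity on a set. -/
def GAConvexOn (s : Set ℝ) (f : ℝ → ℝ) : Prop :=
  ∀ x ∈ s, ∀ y ∈ s, ∀ t ∈ Set.Icc (0:ℝ) 1,
    f (x ^ t * y ^ (1 - t)) ≤ t * f x + (1 - t) * f y

/-- `(α, m)`-GA-convexity on a set. -/
def GAAlphaMConvexOn (α m : ℝ) (s : Set ℝ) (g : ℝ → ℝ) : Prop :=
  ∀ x ∈ s, ∀ y ∈ s, ∀ t ∈ Set.Icc (0:ℝ) 1,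
    g (x ^ t * y ^ (m * (1 - t))) ≤ t ^ α * g x + m * (1 - t ^ α) * g y

/-- The quantity `K_f(λ, θ, x^m, a^m, b^m)` of the paper. -/
noncomputable def Kf (f : ℝ → ℝ) (l θ m x a b : ℝ) : ℝ :=
  (1 - l) * m ^ θ * ((Real.log (x / a)) ^ θ + (Real.log (b / x)) ^ θ) * f (x ^ m)
  + l * m ^ θ * (f (a ^ m) * (Real.log (x / a)) ^ θ + f (b ^ m) * (Real.log (b / x)) ^ θ)
  - Real.Gamma (θ + 1) * (Jminus θ f (x ^ m) (a ^ m) + Jplus θ f (x ^ m) (b ^ m))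

noncomputable def hadPhi (a b u : ℝ) : ℝ :=
  Real.exp (Real.log b - u * (Real.log b - Real.log a))

lemma hadPhi_pos (a b u : ℝ) : 0 < hadPhi a b u := Real.exp_pos _

lemma hadPhi_eq {a b : ℝ} (ha : 0 < a) (hb : 0 < b) (u : ℝ) :
    hadPhi a b u = a ^ u * b ^ (1 - u) := by
  rw [Real.rpow_def_of_pos ha, Real.rpow_def_of_pos hb, ← Real.exp_add, hadPhi]
  congr 1; ring

lemma log_hadPhi (a b u : ℝ) :
    Real.log (hadPhi a b u) = Real.log b - u * (Real.log b - Real.log a) :=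
  Real.log_exp _

lemma hadPhi_mem {a b : ℝ} (ha : 0 < a) (hab : a < b) {u : ℝ} (hu : u ∈ Icc (0:ℝ) 1) :
    hadPhi a b u ∈ Icc a b := by
  have hb : 0 < b := ha.trans hab
  have hL : 0 < Real.log b - Real.log a := sub_pos.2 (Real.log_lt_log ha hab)
  constructor
  · exact (Real.log_le_iff_le_exp ha).1 (by nlinarith [hu.1, hu.2])
  · exact (Real.le_log_iff_exp_le hb).1 (by nlinarith [hu.1, hu.2])

lemma hadPhi_image {a b : ℝ} (ha : 0 < a) (hab : a < b) :
    hadPhi a b '' Ioo (0:ℝ) 1 = Ioo a b := by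
  have hb : 0 < b := ha.trans hab
  have hL : 0 < Real.log b - Real.log a := sub_pos.2 (Real.log_lt_log ha hab)
  ext t
  constructor
  · rintro ⟨u, hu, rfl⟩
    constructor
    · exact (Real.log_lt_iff_lt_exp ha).1 (by nlinarith [hu.1, hu.2])
    · exact (Real.lt_log_iff_exp_lt hb).1 (by nlinarith [hu.1, hu.2])
  · intro ht
    have ht0 : 0 < t := ha.trans ht.1
    refine ⟨(Real.log b - Real.log t) / (Real.log b - Real.log a), ⟨?_, ?_⟩, ?_⟩
    · have h1 : Real.log t < Real.log b := Real.log_lt_log ht0 ht.2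
      exact div_pos (by linarith) hL
    · rw [div_lt_one hL]
      have : Real.log a < Real.log t := Real.log_lt_log ha ht.1
      linarith
    · rw [hadPhi]
      rw [div_mul_cancel₀ _ hL.ne']
      rw [sub_sub_cancel, Real.exp_log ht0]

lemma hadPhi_inj {a b : ℝ} (ha : 0 < a) (hab : a < b) (s : Set ℝ) :
    InjOn (hadPhi a b) s := by
  have hL : 0 < Real.log b - Real.log a := sub_pos.2 (Real.log_lt_log ha hab)
  intro u _ v _ h
  have := Real.exp_injective h
  have h2 : u * (Real.log b - Real.log a) = v * (Real.log b - Real.log a) := by linarith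
  exact mul_right_cancel₀ hL.ne' h2

lemma hadPhi_deriv (a b u : ℝ) :
    HasDerivAt (hadPhi a b) (-(Real.log b - Real.log a) * hadPhi a b u) u := by
  have h1 : HasDerivAt (fun u : ℝ => Real.log b - u * (Real.log b - Real.log a))
      (-(Real.log b - Real.log a)) u :=
    (hasDerivAt_mul_const (Real.log b - Real.log a)).const_sub (Real.log b)
  have := (Real.hasDerivAt_exp (Real.log b - u * (Real.log b - Real.log a))).comp u h1
  show HasDerivAt (fun u => Real.exp (Real.log b - u * (Real.log b - Real.log a))) _ u
  exact h1.exp.congr_deriv (mul_comm _ _)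

lemma hadPhi_mul {a b : ℝ} (ha : 0 < a) (hb : 0 < b) (u : ℝ) :
    hadPhi a b u * hadPhi a b (1 - u) = a * b := by
  rw [hadPhi, hadPhi, ← Real.exp_add, ← Real.exp_log (mul_pos ha hb),
    Real.log_mul ha.ne' hb.ne']
  congr 1; ring

section
variable {a b : ℝ}

lemma hadPhi_subst_integral (ha : 0 < a) (hab : a < b) (g : ℝ → ℝ) :
    ∫ t in Ioo a b, g t =
      ∫ u in Ioo (0:ℝ) 1,
        ((Real.log b - Real.log a) * hadPhi a b u) * g (hadPhi a b u) := by
  have hL : 0 < Real.log b - Real.log a := sub_pos.2 (Real.log_lt_log ha hab)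
  have h := integral_image_eq_integral_abs_deriv_smul measurableSet_Ioo
    (fun u _ => (hadPhi_deriv a b u).hasDerivWithinAt)
    (hadPhi_inj ha hab (Ioo 0 1)) g
  rw [hadPhi_image ha hab] at h
  rw [h]
  congr 1
  funext u
  rw [smul_eq_mul, abs_mul, abs_neg, abs_of_pos hL, abs_of_pos (hadPhi_pos a b u)]

lemma hadPhi_subst_integrableOn (ha : 0 < a) (hab : a < b) (g : ℝ → ℝ) :
    IntegrableOn g (Ioo a b) ↔
      IntegrableOn (fun u =>
        ((Real.log b - Real.log a) * hadPhi a b u) * g (hadPhi a b u)) (Ioo (0:ℝ) 1) := by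
  have hL : 0 < Real.log b - Real.log a := sub_pos.2 (Real.log_lt_log ha hab)
  have h := integrableOn_image_iff_integrableOn_abs_deriv_smul measurableSet_Ioo
    (fun u _ => (hadPhi_deriv a b u).hasDerivWithinAt)
    (hadPhi_inj ha hab (Ioo 0 1)) g
  rw [hadPhi_image ha hab] at h
  rw [h]
  constructor <;> intro h2 <;> refine h2.congr_fun (fun u _ => ?_) measurableSet_Ioo <;>
    simp only [smul_eq_mul] <;> rw [abs_mul, abs_neg, abs_of_pos hL, abs_of_pos (hadPhi_pos a b u)]

end

set_option maxHeartbeats 800000 in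
lemma ga_bound {a b : ℝ} (ha : 0 < a) (hab : a < b) {f : ℝ → ℝ}
    (hconv : GAConvexOn (Set.Icc a b) f) :
    ∀ t ∈ Set.Icc a b, |f t| ≤ 2 * (|f a| + |f b| + |f (Real.sqrt (a * b))|) := by
  intro t ht
  have hb : 0 < b := ha.trans hab
  have ht0 : 0 < t := ha.trans_le ht.1
  have hL : 0 < Real.log b - Real.log a := sub_pos.2 (Real.log_lt_log ha hab)
  set c := Real.sqrt (a * b) with hc
  have hlogc : Real.log c = (Real.log a + Real.log b) / 2 := by
    rw [hc, Real.log_sqrt (mul_pos ha hb).le, Real.log_mul ha.ne' hb.ne']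
  have hac : a < c := by
    have := Real.sqrt_lt_sqrt (mul_pos ha ha).le (by nlinarith : a * a < a * b)
    rwa [Real.sqrt_mul_self ha.le] at this
  have hcb : c < b := by
    have := Real.sqrt_lt_sqrt (mul_pos ha hb).le (by nlinarith : a * b < b * b)
    rwa [Real.sqrt_mul_self hb.le] at this
  have hc0 : 0 < c := ha.trans hac
  rw [abs_le]
  constructor
  · -- lower bound
    rcases le_total t c with htc | hct
    · -- t ≤ c < b ; c = t^s * b^(1-s)
      have htb : t < b := htc.trans_lt hcb
      have hd : 0 < Real.log b - Real.log t := sub_pos.2 (Real.log_lt_log ht0 htb)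
      set s := (Real.log b - Real.log c) / (Real.log b - Real.log t) with hs
      have hlogtc : Real.log t ≤ Real.log c := Real.log_le_log ht0 htc
      have hlogat : Real.log a ≤ Real.log t := Real.log_le_log ha ht.1
      have hs1 : s ≤ 1 := by rw [hs, div_le_one hd]; linarith
      have hshalf : 1/2 ≤ s := by
        rw [hs, le_div_iff₀ hd]; nlinarith
      have key : t ^ s * b ^ (1 - s) = c := by
        rw [← hadPhi_eq ht0 hb, hadPhi, div_mul_cancel₀ _ hd.ne']
        rw [sub_sub_cancel, Real.exp_log hc0]
      have h := hconv t ⟨ht.1, htb.le⟩ b ⟨hab.le, le_refl b⟩ s ⟨by linarith, hs1⟩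
      rw [key] at h
      have h1 : (1 - s) * f b ≤ |f b| := by
        nlinarith [le_abs_self (f b), abs_nonneg (f b)]
      have h2 : -|f c| - |f b| ≤ s * f t := by
        nlinarith [neg_abs_le (f c)]
      nlinarith [abs_nonneg (f a), abs_nonneg (f b), abs_nonneg (f c),
        mul_nonneg (by linarith : (0:ℝ) ≤ s - 1/2)
          (by positivity : (0:ℝ) ≤ |f b| + |f c|)]
    · -- a < c ≤ t ; c = t^s * a^(1-s)
      have hat : a < t := hac.trans_le hct
      have hd : 0 < Real.log t - Real.log a := sub_pos.2 (Real.log_lt_log ha hat)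
      set s := (Real.log c - Real.log a) / (Real.log t - Real.log a) with hs
      have hlogct : Real.log c ≤ Real.log t := Real.log_le_log hc0 hct
      have hlogtb : Real.log t ≤ Real.log b := Real.log_le_log ht0 ht.2
      have hs1 : s ≤ 1 := by rw [hs, div_le_one hd]; linarith
      have hshalf : 1/2 ≤ s := by rw [hs, le_div_iff₀ hd]; nlinarith
      have key : t ^ s * a ^ (1 - s) = c := by
        have : t ^ s * a ^ (1 - s) = a ^ (1 - s) * t ^ (1 - (1 - s)) := by
          rw [sub_sub_cancel]; exact mul_comm _ _
        rw [this, ← hadPhi_eq ha ht0, hadPhi]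
        have hes : (1 - s) * (Real.log t - Real.log a) = Real.log t - Real.log c := by
          rw [hs, sub_mul, one_mul, div_mul_cancel₀ _ hd.ne']; ring
        rw [hes, sub_sub_cancel, Real.exp_log hc0]
      have h := hconv t ⟨hat.le, ht.2⟩ a ⟨le_refl a, hab.le⟩ s ⟨by linarith, hs1⟩
      rw [key] at h
      have h1 : (1 - s) * f a ≤ |f a| := by
        nlinarith [le_abs_self (f a), abs_nonneg (f a)]
      have h2 : -|f c| - |f a| ≤ s * f t := by
        nlinarith [neg_abs_le (f c)]
      nlinarith [abs_nonneg (f a), abs_nonneg (f b), abs_nonneg (f c),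
        mul_nonneg (by linarith : (0:ℝ) ≤ s - 1/2)
          (by positivity : (0:ℝ) ≤ |f a| + |f c|)]
  · -- upper bound
    set s := (Real.log b - Real.log t) / (Real.log b - Real.log a) with hs
    have hlogat : Real.log a ≤ Real.log t := Real.log_le_log ha ht.1
    have hlogtb : Real.log t ≤ Real.log b := Real.log_le_log ht0 ht.2
    have hs0 : 0 ≤ s := div_nonneg (by linarith) hL.le
    have hs1 : s ≤ 1 := by rw [hs, div_le_one hL]; linarith
    have key : a ^ s * b ^ (1 - s) = t := by
      rw [← hadPhi_eq ha hb, hadPhi, div_mul_cancel₀ _ hL.ne']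
      rw [sub_sub_cancel, Real.exp_log ht0]
    have h := hconv a ⟨le_refl a, hab.le⟩ b ⟨hab.le, le_refl b⟩ s ⟨hs0, hs1⟩
    rw [key] at h
    have h3 : s * f a ≤ s * |f a| := mul_le_mul_of_nonneg_left (le_abs_self _) hs0
    have h4 : (1 - s) * f b ≤ (1 - s) * |f b| :=
      mul_le_mul_of_nonneg_left (le_abs_self _) (by linarith)
    have h5 : s * |f a| ≤ |f a| := mul_le_of_le_one_left (abs_nonneg _) hs1
    have h6 : (1 - s) * |f b| ≤ |f b| := mul_le_of_le_one_left (abs_nonneg _) (by linarith)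
    have h7 : (0:ℝ) ≤ |f c| := abs_nonneg _
    linarith [abs_nonneg (f a), abs_nonneg (f b)]

section
variable {a b θ : ℝ} {f : ℝ → ℝ}

lemma weight1_int (ha : 0 < a) (hab : a < b) (hθ : 0 < θ) :
    IntegrableOn (fun t => (Real.log b - Real.log t) ^ (θ - 1) / t) (Ioo a b) := by
  have hL : 0 < Real.log b - Real.log a := sub_pos.2 (Real.log_lt_log ha hab)
  rw [hadPhi_subst_integrableOn ha hab]
  have hbase : IntegrableOn (fun u : ℝ => (Real.log b - Real.log a) ^ θ * u ^ (θ - 1))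
      (Ioo (0:ℝ) 1) :=
    (((intervalIntegrable_rpow' (by linarith : (-1:ℝ) < θ - 1)).1).mono_set
      Ioo_subset_Ioc_self).const_mul _
  refine hbase.congr_fun (fun u hu => ?_) measurableSet_Ioo
  have hu0 : 0 < u := hu.1
  have hphi := hadPhi_pos a b u
  rw [log_hadPhi]
  have h1 : Real.log b - (Real.log b - u * (Real.log b - Real.log a))
      = u * (Real.log b - Real.log a) := by ring
  rw [h1, Real.mul_rpow hu0.le hL.le]
  have h3 : (Real.log b - Real.log a) ^ θ
      = (Real.log b - Real.log a) * (Real.log b - Real.log a) ^ (θ - 1) := by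
    nth_rewrite 1 [show θ = 1 + (θ - 1) by ring]
    rw [Real.rpow_add' hL.le (by intro h; exact hθ.ne' (by linarith)), Real.rpow_one]
  rw [h3]; field_simp

lemma weight2_int (ha : 0 < a) (hab : a < b) (hθ : 0 < θ) :
    IntegrableOn (fun t => (Real.log t - Real.log a) ^ (θ - 1) / t) (Ioo a b) := by
  have hL : 0 < Real.log b - Real.log a := sub_pos.2 (Real.log_lt_log ha hab)
  rw [hadPhi_subst_integrableOn ha hab]
  have hbase0 : IntervalIntegrable (fun u : ℝ => (1 - u) ^ (θ - 1)) volume 0 1 := by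
    have h := (intervalIntegrable_rpow' (by linarith : (-1:ℝ) < θ - 1)
      (a := 0) (b := 1)).comp_sub_left 1
    norm_num at h
    exact h.symm
  have hbase : IntegrableOn (fun u : ℝ => (Real.log b - Real.log a) ^ θ * (1 - u) ^ (θ - 1))
      (Ioo (0:ℝ) 1) := ((hbase0.1).mono_set Ioo_subset_Ioc_self).const_mul _
  refine hbase.congr_fun (fun u hu => ?_) measurableSet_Ioo
  have hu1 : u < 1 := hu.2
  have hphi := hadPhi_pos a b u
  rw [log_hadPhi]
  have h1 : Real.log b - u * (Real.log b - Real.log a) - Real.log a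
      = (1 - u) * (Real.log b - Real.log a) := by ring
  rw [h1, Real.mul_rpow (by linarith : (0:ℝ) ≤ 1 - u) hL.le]
  have h3 : (Real.log b - Real.log a) ^ θ
      = (Real.log b - Real.log a) * (Real.log b - Real.log a) ^ (θ - 1) := by
    nth_rewrite 1 [show θ = 1 + (θ - 1) by ring]
    rw [Real.rpow_add' hL.le (by intro h; exact hθ.ne' (by linarith)), Real.rpow_one]
  rw [h3]; field_simp

end

section
variable {a b θ M : ℝ} {f : ℝ → ℝ}

lemma point1 (ha : 0 < a) (hab : a < b) (hθ : 0 < θ) (f : ℝ → ℝ) {u : ℝ}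
    (hu : u ∈ Ioo (0:ℝ) 1) :
    (Real.log b - Real.log a) * hadPhi a b u *
      ((Real.log b - Real.log (hadPhi a b u)) ^ (θ-1) * f (hadPhi a b u) / hadPhi a b u)
    = (Real.log b - Real.log a) ^ θ * (u ^ (θ-1) * f (hadPhi a b u)) := by
  have hL : 0 < Real.log b - Real.log a := sub_pos.2 (Real.log_lt_log ha hab)
  have hphi := hadPhi_pos a b u
  rw [log_hadPhi]
  have h1 : Real.log b - (Real.log b - u * (Real.log b - Real.log a))
      = u * (Real.log b - Real.log a) := by ring
  rw [h1, Real.mul_rpow hu.1.le hL.le]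
  have h3 : (Real.log b - Real.log a) ^ θ
      = (Real.log b - Real.log a) * (Real.log b - Real.log a) ^ (θ - 1) := by
    nth_rewrite 1 [show θ = 1 + (θ - 1) by ring]
    rw [Real.rpow_add' hL.le (by intro h; exact hθ.ne' (by linarith)), Real.rpow_one]
  rw [h3]; field_simp

lemma point2 (ha : 0 < a) (hab : a < b) (hθ : 0 < θ) (f : ℝ → ℝ) {u : ℝ}
    (hu : u ∈ Ioo (0:ℝ) 1) :
    (Real.log b - Real.log a) * hadPhi a b u *
      ((Real.log (hadPhi a b u) - Real.log a) ^ (θ-1) * f (hadPhi a b u) / hadPhi a b u)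
    = (Real.log b - Real.log a) ^ θ * ((1 - u) ^ (θ-1) * f (hadPhi a b u)) := by
  have hL : 0 < Real.log b - Real.log a := sub_pos.2 (Real.log_lt_log ha hab)
  have hphi := hadPhi_pos a b u
  rw [log_hadPhi]
  have h1 : Real.log b - u * (Real.log b - Real.log a) - Real.log a
      = (1 - u) * (Real.log b - Real.log a) := by ring
  rw [h1, Real.mul_rpow (by linarith [hu.2] : (0:ℝ) ≤ 1 - u) hL.le]
  have h3 : (Real.log b - Real.log a) ^ θ
      = (Real.log b - Real.log a) * (Real.log b - Real.log a) ^ (θ - 1) := by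
    nth_rewrite 1 [show θ = 1 + (θ - 1) by ring]
    rw [Real.rpow_add' hL.le (by intro h; exact hθ.ne' (by linarith)), Real.rpow_one]
  rw [h3]; field_simp

lemma g1_int (ha : 0 < a) (hab : a < b) (hθ : 0 < θ)
    (hint : IntervalIntegrable f volume a b)
    (hbd : ∀ t ∈ Icc a b, |f t| ≤ M) :
    IntegrableOn (fun t => (Real.log b - Real.log t) ^ (θ-1) * f t / t) (Ioo a b) := by
  have hf : AEStronglyMeasurable f (volume.restrict (Ioo a b)) :=
    (hint.1.mono_set Ioo_subset_Ioc_self).aestronglyMeasurable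
  have hsub : Ioo a b ⊆ ({0}ᶜ : Set ℝ) := fun t ht => (ha.trans ht.1).ne'
  have hwcont : ContinuousOn (fun t => (Real.log b - Real.log t) ^ (θ-1) * t⁻¹) (Ioo a b) := by
    refine ContinuousOn.mul ?_ (continuousOn_inv₀.mono hsub)
    refine ContinuousOn.rpow_const
      (continuousOn_const.sub (Real.continuousOn_log.mono hsub)) (fun t ht => ?_)
    left
    have : Real.log t < Real.log b := Real.log_lt_log (ha.trans ht.1) ht.2
    intro h; linarith [sub_eq_zero.1 h]
  have haesm : AEStronglyMeasurable
      (fun t => (Real.log b - Real.log t) ^ (θ-1) * f t / t) (volume.restrict (Ioo a b)) := by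
    have h := (hwcont.aestronglyMeasurable measurableSet_Ioo).mul hf
    refine h.congr (Filter.Eventually.of_forall fun t => ?_)
    show (Real.log b - Real.log t) ^ (θ-1) * t⁻¹ * f t = (Real.log b - Real.log t) ^ (θ-1) * f t / t
    rw [div_eq_mul_inv]; ring
  refine Integrable.mono' ((weight1_int ha hab hθ).const_mul M) haesm ?_
  rw [ae_restrict_iff' measurableSet_Ioo]
  filter_upwards with t ht
  have ht0 : 0 < t := ha.trans ht.1
  have hw : 0 ≤ (Real.log b - Real.log t) ^ (θ-1) := by
    have : Real.log t ≤ Real.log b := Real.log_le_log ht0 ht.2.le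
    exact Real.rpow_nonneg (by linarith) _
  rw [Real.norm_eq_abs, abs_div, abs_mul, abs_of_nonneg hw, abs_of_pos ht0]
  have hM : |f t| ≤ M := hbd t ⟨ht.1.le, ht.2.le⟩
  rw [show M * ((Real.log b - Real.log t) ^ (θ-1) / t)
      = (Real.log b - Real.log t) ^ (θ-1) * M / t by ring]
  gcongr

lemma g2_int (ha : 0 < a) (hab : a < b) (hθ : 0 < θ)
    (hint : IntervalIntegrable f volume a b)
    (hbd : ∀ t ∈ Icc a b, |f t| ≤ M) :
    IntegrableOn (fun t => (Real.log t - Real.log a) ^ (θ-1) * f t / t) (Ioo a b) := by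
  have hf : AEStronglyMeasurable f (volume.restrict (Ioo a b)) :=
    (hint.1.mono_set Ioo_subset_Ioc_self).aestronglyMeasurable
  have hsub : Ioo a b ⊆ ({0}ᶜ : Set ℝ) := fun t ht => (ha.trans ht.1).ne'
  have hwcont : ContinuousOn (fun t => (Real.log t - Real.log a) ^ (θ-1) * t⁻¹) (Ioo a b) := by
    refine ContinuousOn.mul ?_ (continuousOn_inv₀.mono hsub)
    refine ContinuousOn.rpow_const
      ((Real.continuousOn_log.mono hsub).sub continuousOn_const) (fun t ht => ?_)
    left
    have : Real.log a < Real.log t := Real.log_lt_log ha ht.1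
    intro h; linarith [sub_eq_zero.1 h]
  have haesm : AEStronglyMeasurable
      (fun t => (Real.log t - Real.log a) ^ (θ-1) * f t / t) (volume.restrict (Ioo a b)) := by
    have h := (hwcont.aestronglyMeasurable measurableSet_Ioo).mul hf
    refine h.congr (Filter.Eventually.of_forall fun t => ?_)
    show (Real.log t - Real.log a) ^ (θ-1) * t⁻¹ * f t = (Real.log t - Real.log a) ^ (θ-1) * f t / t
    rw [div_eq_mul_inv]; ring
  refine Integrable.mono' ((weight2_int ha hab hθ).const_mul M) haesm ?_
  rw [ae_restrict_iff' measurableSet_Ioo]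
  filter_upwards with t ht
  have ht0 : 0 < t := ha.trans ht.1
  have hw : 0 ≤ (Real.log t - Real.log a) ^ (θ-1) := by
    have : Real.log a ≤ Real.log t := Real.log_le_log ha ht.1.le
    exact Real.rpow_nonneg (by linarith) _
  rw [Real.norm_eq_abs, abs_div, abs_mul, abs_of_nonneg hw, abs_of_pos ht0]
  have hM : |f t| ≤ M := hbd t ⟨ht.1.le, ht.2.le⟩
  rw [show M * ((Real.log t - Real.log a) ^ (θ-1) / t)
      = (Real.log t - Real.log a) ^ (θ-1) * M / t by ring]
  gcongr

end

section
variable {a b θ M : ℝ} {f : ℝ → ℝ}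

lemma pull1_int (ha : 0 < a) (hab : a < b) (hθ : 0 < θ)
    (hint : IntervalIntegrable f volume a b)
    (hbd : ∀ t ∈ Icc a b, |f t| ≤ M) :
    IntegrableOn (fun u => u ^ (θ-1) * f (hadPhi a b u)) (Ioo (0:ℝ) 1) := by
  have hL : 0 < Real.log b - Real.log a := sub_pos.2 (Real.log_lt_log ha hab)
  have hLθ : 0 < (Real.log b - Real.log a) ^ θ := Real.rpow_pos_of_pos hL θ
  have h := (hadPhi_subst_integrableOn ha hab
    (fun t => (Real.log b - Real.log t) ^ (θ-1) * f t / t)).mp (g1_int ha hab hθ hint hbd)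
  have h2 : IntegrableOn (fun u =>
      ((Real.log b - Real.log a) ^ θ)⁻¹ * _) (Ioo (0:ℝ) 1) volume :=
    h.const_mul (((Real.log b - Real.log a) ^ θ)⁻¹)
  refine h2.congr_fun (fun u hu => ?_) measurableSet_Ioo
  show (((Real.log b - Real.log a) ^ θ)⁻¹ * _) = _
  rw [point1 ha hab hθ f hu, ← mul_assoc, inv_mul_cancel₀ hLθ.ne', one_mul]

lemma pull2_int (ha : 0 < a) (hab : a < b) (hθ : 0 < θ)
    (hint : IntervalIntegrable f volume a b)
    (hbd : ∀ t ∈ Icc a b, |f t| ≤ M) :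
    IntegrableOn (fun u => (1-u) ^ (θ-1) * f (hadPhi a b u)) (Ioo (0:ℝ) 1) := by
  have hL : 0 < Real.log b - Real.log a := sub_pos.2 (Real.log_lt_log ha hab)
  have hLθ : 0 < (Real.log b - Real.log a) ^ θ := Real.rpow_pos_of_pos hL θ
  have h := (hadPhi_subst_integrableOn ha hab
    (fun t => (Real.log t - Real.log a) ^ (θ-1) * f t / t)).mp (g2_int ha hab hθ hint hbd)
  have h2 : IntegrableOn (fun u =>
      ((Real.log b - Real.log a) ^ θ)⁻¹ * _) (Ioo (0:ℝ) 1) volume :=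
    h.const_mul (((Real.log b - Real.log a) ^ θ)⁻¹)
  refine h2.congr_fun (fun u hu => ?_) measurableSet_Ioo
  show (((Real.log b - Real.log a) ^ θ)⁻¹ * _) = _
  rw [point2 ha hab hθ f hu, ← mul_assoc, inv_mul_cancel₀ hLθ.ne', one_mul]

lemma pull1_eq (ha : 0 < a) (hab : a < b) (hθ : 0 < θ) (f : ℝ → ℝ) :
    ∫ t in Ioo a b, (Real.log b - Real.log t) ^ (θ-1) * f t / t
      = (Real.log b - Real.log a) ^ θ * ∫ u in Ioo (0:ℝ) 1, u ^ (θ-1) * f (hadPhi a b u) := by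
  rw [hadPhi_subst_integral ha hab, ← MeasureTheory.integral_const_mul]
  exact setIntegral_congr_fun measurableSet_Ioo (fun u hu => point1 ha hab hθ f hu)

lemma pull2_eq (ha : 0 < a) (hab : a < b) (hθ : 0 < θ) (f : ℝ → ℝ) :
    ∫ t in Ioo a b, (Real.log t - Real.log a) ^ (θ-1) * f t / t
      = (Real.log b - Real.log a) ^ θ * ∫ u in Ioo (0:ℝ) 1, (1-u) ^ (θ-1) * f (hadPhi a b u) := by
  rw [hadPhi_subst_integral ha hab, ← MeasureTheory.integral_const_mul]
  exact setIntegral_congr_fun measurableSet_Ioo (fun u hu => point2 ha hab hθ f hu)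

end

theorem stmt6 (I : Set ℝ) (hI : I ⊆ Set.Ioi 0) (f : ℝ → ℝ) (a b : ℝ)
    (hab : a < b) (hIcc : Set.Icc a b ⊆ I)
    (hconv : GAConvexOn (Set.Icc a b) f)
    (hint : IntervalIntegrable f MeasureTheory.volume a b)
    (θ : ℝ) (hθ : 0 < θ) :
    f (Real.sqrt (a * b)) ≤
      Real.Gamma (θ + 1) / (2 * (Real.log (b / a)) ^ θ) *
        (Jplus θ f a b + Jminus θ f b a) ∧
    Real.Gamma (θ + 1) / (2 * (Real.log (b / a)) ^ θ) *
        (Jplus θ f a b + Jminus θ f b a) ≤ (f a + f b) / 2 := by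
  have ha : 0 < a := hI (hIcc ⟨le_refl a, hab.le⟩)
  have hb : 0 < b := ha.trans hab
  have hL : 0 < Real.log b - Real.log a := sub_pos.2 (Real.log_lt_log ha hab)
  have hLθ : 0 < (Real.log b - Real.log a) ^ θ := Real.rpow_pos_of_pos hL θ
  have hΓ : 0 < Real.Gamma θ := Real.Gamma_pos_of_pos hθ
  have hΓ1 : Real.Gamma (θ + 1) = θ * Real.Gamma θ := Real.Gamma_add_one hθ.ne'
  have hlogba : Real.log (b / a) = Real.log b - Real.log a := Real.log_div hb.ne' ha.ne'
  have hbd := ga_bound ha hab hconv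
  set c := Real.sqrt (a * b) with hc
  set P := ∫ u in (0:ℝ)..1, u ^ (θ-1) * f (hadPhi a b u) with hP
  set Q := ∫ u in (0:ℝ)..1, (1-u) ^ (θ-1) * f (hadPhi a b u) with hQ
  set Q' := ∫ u in (0:ℝ)..1, u ^ (θ-1) * f (hadPhi a b (1-u)) with hQ'
  have iP : IntervalIntegrable (fun u => u ^ (θ-1) * f (hadPhi a b u)) volume 0 1 :=
    (intervalIntegrable_iff_integrableOn_Ioo_of_le zero_le_one).mpr
      (pull1_int ha hab hθ hint hbd)
  have iQ : IntervalIntegrable (fun u => (1-u) ^ (θ-1) * f (hadPhi a b u)) volume 0 1 :=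
    (intervalIntegrable_iff_integrableOn_Ioo_of_le zero_le_one).mpr
      (pull2_int ha hab hθ hint hbd)
  have iQ' : IntervalIntegrable (fun u => u ^ (θ-1) * f (hadPhi a b (1-u))) volume 0 1 := by
    have h := (iQ.comp_sub_left 1).symm
    norm_num at h
    exact h
  -- J formulas
  have hJP : Jplus θ f a b
      = (1 / Real.Gamma θ) * ((Real.log b - Real.log a) ^ θ * P) := by
    rw [Jplus]
    congr 1
    rw [intervalIntegral.integral_of_le hab.le, integral_Ioc_eq_integral_Ioo]
    rw [setIntegral_congr_fun measurableSet_Ioo (g := fun t =>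
        (Real.log b - Real.log t) ^ (θ-1) * f t / t)
      (fun t ht => by rw [Real.log_div hb.ne' (ha.trans ht.1).ne'])]
    rw [pull1_eq ha hab hθ f]
    rw [hP, intervalIntegral.integral_of_le zero_le_one, integral_Ioc_eq_integral_Ioo]
  have hJM : Jminus θ f b a
      = (1 / Real.Gamma θ) * ((Real.log b - Real.log a) ^ θ * Q) := by
    rw [Jminus]
    congr 1
    rw [intervalIntegral.integral_of_le hab.le, integral_Ioc_eq_integral_Ioo]
    rw [setIntegral_congr_fun measurableSet_Ioo (g := fun t =>
        (Real.log t - Real.log a) ^ (θ-1) * f t / t)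
      (fun t ht => by rw [Real.log_div (ha.trans ht.1).ne' ha.ne'])]
    rw [pull2_eq ha hab hθ f]
    rw [hQ, intervalIntegral.integral_of_le zero_le_one, integral_Ioc_eq_integral_Ioo]
  -- reflection
  have hQQ' : Q = Q' := by
    have h := intervalIntegral.integral_comp_sub_left (a := (0:ℝ)) (b := 1)
      (fun v => v ^ (θ-1) * f (hadPhi a b (1-v))) 1
    norm_num at h
    rw [hQ, hQ']
    exact h
  -- middle value
  have hmid : Real.Gamma (θ + 1) / (2 * (Real.log (b / a)) ^ θ) *
      (Jplus θ f a b + Jminus θ f b a) = (θ / 2) * (P + Q') := by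
    rw [hJP, hJM, hlogba, hΓ1, ← hQQ']
    field_simp
  have hPQ : P + Q' = ∫ u in (0:ℝ)..1,
      (u ^ (θ-1) * f (hadPhi a b u) + u ^ (θ-1) * f (hadPhi a b (1-u))) :=
    (intervalIntegral.integral_add iP iQ').symm
  constructor
  · -- lower bound
    have key0 : ∀ u ∈ Icc (0:ℝ) 1, u ^ (θ-1) * (2 * f c)
        ≤ u ^ (θ-1) * f (hadPhi a b u) + u ^ (θ-1) * f (hadPhi a b (1-u)) := by
      intro u hu
      have hw : (0:ℝ) ≤ u ^ (θ-1) := Real.rpow_nonneg hu.1 _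
      have hmem1 := hadPhi_mem ha hab hu
      have hmem2 : hadPhi a b (1-u) ∈ Icc a b :=
        hadPhi_mem ha hab ⟨by linarith [hu.2], by linarith [hu.1]⟩
      have h := hconv _ hmem1 _ hmem2 (1/2) ⟨by norm_num, by norm_num⟩
      have harg : (hadPhi a b u) ^ ((1:ℝ)/2) * (hadPhi a b (1-u)) ^ (1-(1:ℝ)/2) = c := by
        rw [show (1:ℝ)-1/2 = 1/2 by norm_num,
          ← Real.mul_rpow (hadPhi_pos a b u).le (hadPhi_pos a b (1-u)).le,
          hadPhi_mul ha hb, hc, Real.sqrt_eq_rpow]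
      rw [harg] at h
      nlinarith [mul_le_mul_of_nonneg_left h hw]
    have iLow : IntervalIntegrable (fun u : ℝ => u ^ (θ-1) * (2 * f c)) volume 0 1 :=
      (intervalIntegrable_rpow' (by linarith)).mul_const _
    have hlow := intervalIntegral.integral_mono_on zero_le_one iLow (iP.add iQ') key0
    have hIlow : (∫ u in (0:ℝ)..1, u ^ (θ-1) * (2 * f c)) = 2 * f c / θ := by
      rw [intervalIntegral.integral_mul_const,
        integral_rpow (Or.inl (by linarith : (-1:ℝ) < θ - 1))]
      rw [show θ - 1 + 1 = θ by ring, Real.one_rpow, Real.zero_rpow hθ.ne']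
      ring
    rw [hIlow, ← hPQ] at hlow
    rw [hmid]
    calc f c = (θ/2) * (2 * f c / θ) := by field_simp
    _ ≤ (θ/2) * (P + Q') := mul_le_mul_of_nonneg_left hlow (by positivity)
  · -- upper bound
    have key1 : ∀ u ∈ Icc (0:ℝ) 1,
        u ^ (θ-1) * f (hadPhi a b u) + u ^ (θ-1) * f (hadPhi a b (1-u))
          ≤ u ^ (θ-1) * (f a + f b) := by
      intro u hu
      have hw : (0:ℝ) ≤ u ^ (θ-1) := Real.rpow_nonneg hu.1 _
      have h1 := hconv a ⟨le_refl a, hab.le⟩ b ⟨hab.le, le_refl b⟩ u hu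
      rw [← hadPhi_eq ha hb u] at h1
      have h2 := hconv a ⟨le_refl a, hab.le⟩ b ⟨hab.le, le_refl b⟩ (1-u)
        ⟨by linarith [hu.2], by linarith [hu.1]⟩
      rw [← hadPhi_eq ha hb (1-u), sub_sub_cancel] at h2
      have hsum : f (hadPhi a b u) + f (hadPhi a b (1-u)) ≤ f a + f b := by linarith
      calc u ^ (θ-1) * f (hadPhi a b u) + u ^ (θ-1) * f (hadPhi a b (1-u))
          = u ^ (θ-1) * (f (hadPhi a b u) + f (hadPhi a b (1-u))) := by ring
      _ ≤ u ^ (θ-1) * (f a + f b) := mul_le_mul_of_nonneg_left hsum hw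
    have iUp : IntervalIntegrable (fun u : ℝ => u ^ (θ-1) * (f a + f b)) volume 0 1 :=
      (intervalIntegrable_rpow' (by linarith)).mul_const _
    have hup := intervalIntegral.integral_mono_on zero_le_one (iP.add iQ') iUp key1
    have hIup : (∫ u in (0:ℝ)..1, u ^ (θ-1) * (f a + f b)) = (f a + f b) / θ := by
      rw [intervalIntegral.integral_mul_const,
        integral_rpow (Or.inl (by linarith : (-1:ℝ) < θ - 1))]
      rw [show θ - 1 + 1 = θ by ring, Real.one_rpow, Real.zero_rpow hθ.ne']
      ring
    rw [hIup, ← hPQ] at hup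
    rw [hmid]
    calc (θ/2) * (P + Q') ≤ (θ/2) * ((f a + f b)/θ) :=
      mul_le_mul_of_nonneg_left hup (by positivity)
    _ = (f a + f b) / 2 := by field_simp
end

section
/- Let f : I ⊆ (0,∞) → ℝ be differentiable with |f'|^q GA-s-convex in the first sense (i.e. α-GA-convex with α = s) on [a,b] for some q ≥ 1, a < b. Then |f(√(ab)) − (1/(ln b − ln a)) ∫ₐᵇ f(x)/x dx| ≤ ln(b/a) · (1/2)^{3−1/q} { a [|f'(√(ab))|^q C₁ + |f'(a)|^q C₂]^{1/q} + b [|f'(√(ab))|^q C₃ + |f'(b)|^q C₄]^{1/q} }, where C₁ = ∫₀¹ t^{1+α}(b/a)^{qt/2} dt, C₂ = ∫₀¹ t(1−t^α)(b/a)^{qt/2} dt, C₃ = ∫₀¹ t^{1+α}(a/b)^{qt/2} dt, C₄ = ∫₀¹ t(1−t^α)(a/b)^{qt/2} dt. -/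
open MeasureTheory intervalIntegral Set

section Aux

lemma holder_step (q : ℝ) (hq : 1 ≤ q) (φ : ℝ → ℝ) (hφ0 : ∀ t, 0 ≤ φ t)
    (hm : AEStronglyMeasurable φ (volume.restrict (Set.Ioc (0:ℝ) 1)))
    (Cφ : ℝ) (hb : ∀ t ∈ Set.Ioc (0:ℝ) 1, φ t ≤ Cφ) :
    ∫ t in Set.Ioc (0:ℝ) 1, t * φ t ≤
      (1/2:ℝ) ^ (1 - 1/q) * (∫ t in Set.Ioc (0:ℝ) 1, t * φ t ^ q) ^ (1/q) := by
  have hq0 : 0 < q := lt_of_lt_of_le one_pos hq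
  haveI : IsFiniteMeasure (volume.restrict (Set.Ioc (0:ℝ) 1)) := by
    constructor
    rw [Measure.restrict_apply_univ, Real.volume_Ioc]
    exact ENNReal.ofReal_lt_top
  rcases eq_or_lt_of_le hq with h1 | h1
  · rw [← h1]
    simp [Real.rpow_one]
  · set p : ℝ := q.conjExponent with hp
    have hpq : p.HolderConjugate q := (Real.HolderConjugate.conjExponent h1).symm
    have hp1 : 1/p = 1 - 1/q := by
      have := hpq.symm.one_sub_inv
      rw [one_div, one_div, this]
    set F : ℝ → ℝ := fun t => t ^ (1 - 1/q) with hF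
    set G : ℝ → ℝ := fun t => t ^ (1/q) * φ t with hG
    have hae : ∀ᵐ t ∂(volume.restrict (Set.Ioc (0:ℝ) 1)), t ∈ Set.Ioc (0:ℝ) 1 :=
      (ae_restrict_iff' measurableSet_Ioc).2 (Filter.Eventually.of_forall (fun t ht => ht))
    have hcont : Continuous fun t : ℝ => t ^ (1/q) := by
      apply continuous_iff_continuousAt.2
      intro x
      exact Real.continuousAt_rpow_const x _ (Or.inr (by positivity))
    have hcont' : Continuous fun t : ℝ => t ^ (1 - 1/q) := by
      apply continuous_iff_continuousAt.2
      intro x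
      refine Real.continuousAt_rpow_const x _ (Or.inr ?_)
      have : 1/q < 1 := by
        rw [div_lt_one hq0]; exact h1
      linarith
    have hF0 : 0 ≤ᵐ[volume.restrict (Set.Ioc (0:ℝ) 1)] F := by
      filter_upwards [hae] with t ht
      exact Real.rpow_nonneg ht.1.le _
    have hG0 : 0 ≤ᵐ[volume.restrict (Set.Ioc (0:ℝ) 1)] G := by
      filter_upwards [hae] with t ht
      exact mul_nonneg (Real.rpow_nonneg ht.1.le _) (hφ0 t)
    have hFmem : MemLp F (ENNReal.ofReal p) (volume.restrict (Set.Ioc (0:ℝ) 1)) := by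
      refine MemLp.of_bound hcont'.aestronglyMeasurable 1 ?_
      filter_upwards [hae] with t ht
      rw [Real.norm_eq_abs, abs_of_nonneg (Real.rpow_nonneg ht.1.le _)]
      exact Real.rpow_le_one ht.1.le ht.2 (by
        have : 1/q ≤ 1 := by rw [div_le_one hq0]; exact hq
        linarith)
    have hGmem : MemLp G (ENNReal.ofReal q) (volume.restrict (Set.Ioc (0:ℝ) 1)) := by
      refine MemLp.of_bound (hcont.aestronglyMeasurable.mul hm) (max Cφ 0) ?_
      filter_upwards [hae] with t ht
      rw [Real.norm_eq_abs, abs_of_nonneg (mul_nonneg (Real.rpow_nonneg ht.1.le _) (hφ0 t))]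
      calc t ^ (1/q) * φ t ≤ 1 * φ t := by
            apply mul_le_mul_of_nonneg_right _ (hφ0 t)
            exact Real.rpow_le_one ht.1.le ht.2 (by positivity)
        _ = φ t := one_mul _
        _ ≤ max Cφ 0 := le_trans (hb t ht) (le_max_left _ _)
    have key := MeasureTheory.integral_mul_le_Lp_mul_Lq_of_nonneg hpq hF0 hG0 hFmem hGmem
    have e1 : ∫ t in Set.Ioc (0:ℝ) 1, F t * G t = ∫ t in Set.Ioc (0:ℝ) 1, t * φ t := by
      refine integral_congr_ae ?_
      filter_upwards [hae] with t ht
      rw [hF, hG]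
      simp only
      rw [← mul_assoc, ← Real.rpow_add ht.1]
      norm_num
    have e2 : ∫ t in Set.Ioc (0:ℝ) 1, F t ^ p = 1/2 := by
      have : ∫ t in Set.Ioc (0:ℝ) 1, F t ^ p = ∫ t in Set.Ioc (0:ℝ) 1, t := by
        refine integral_congr_ae ?_
        filter_upwards [hae] with t ht
        rw [hF]
        simp only
        rw [← Real.rpow_mul ht.1.le, ← hp1, one_div, inv_mul_cancel₀ hpq.pos.ne', Real.rpow_one]
      rw [this]
      have h01 : (0:ℝ) ≤ 1 := zero_le_one
      rw [← integral_of_le h01, integral_id]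
      norm_num
    have e3 : ∫ t in Set.Ioc (0:ℝ) 1, G t ^ q = ∫ t in Set.Ioc (0:ℝ) 1, t * φ t ^ q := by
      refine integral_congr_ae ?_
      filter_upwards [hae] with t ht
      rw [hG]
      simp only
      rw [Real.mul_rpow (Real.rpow_nonneg ht.1.le _) (hφ0 t), ← Real.rpow_mul ht.1.le,
        one_div, inv_mul_cancel₀ hq0.ne', Real.rpow_one]
    rw [e1, e2, e3, hp1] at key
    exact key

/-- Every point of a positive interval is a geometric combination of the endpoints. -/
lemma rep_aux {x y u : ℝ} (hy : 0 < y) (hyx : y < x) (hu : u ∈ Set.Icc y x) :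
    ∃ t ∈ Set.Icc (0:ℝ) 1, x ^ t * y ^ (1 - t) = u := by
  have hx : 0 < x := hy.trans hyx
  have hu0 : 0 < u := lt_of_lt_of_le hy hu.1
  have hD : 0 < Real.log x - Real.log y := sub_pos.2 (Real.log_lt_log hy hyx)
  refine ⟨(Real.log u - Real.log y) / (Real.log x - Real.log y), ⟨?_, ?_⟩, ?_⟩
  · apply div_nonneg _ hD.le
    have := Real.log_le_log hy hu.1
    linarith
  · rw [div_le_one hD]
    have := Real.log_le_log hu0 hu.2
    linarith
  · rw [Real.rpow_def_of_pos hx, Real.rpow_def_of_pos hy, ← Real.exp_add, ← Real.exp_log hu0]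
    congr 1
    field_simp
    simp only [Real.log_exp]
    ring

/-- A convex combination with coefficients `s, 1-s` is at most the max. -/
lemma combo_le_max {s X Y : ℝ} (hs0 : 0 ≤ s) (hs1 : s ≤ 1) :
    s * X + (1 - s) * Y ≤ max X Y := by
  calc s * X + (1 - s) * Y
      ≤ s * max X Y + (1 - s) * max X Y :=
        add_le_add (mul_le_mul_of_nonneg_left (le_max_left _ _) hs0)
          (mul_le_mul_of_nonneg_left (le_max_right _ _) (by linarith))
    _ = max X Y := by ring

/-- Boundedness of `|f'|` on `[a,b]` from `(α,1)`-GA-convexity of `|f'|^q`. -/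
lemma bound_aux (f' : ℝ → ℝ) (a b : ℝ) (ha : 0 < a) (hab : a < b)
    (α q : ℝ) (hα0 : 0 < α) (hα1 : α ≤ 1) (hq0 : 0 < q)
    (hconv : GAAlphaMConvexOn α 1 (Set.Icc a b) (fun u => |f' u| ^ q)) :
    ∀ u ∈ Set.Icc a b, |f' u| ≤
      max |f' a| (max |f' (Real.sqrt (a * b))| |f' b|) := by
  set m := Real.sqrt (a * b) with hm
  set C := max |f' a| (max |f' m| |f' b|) with hC
  have hb : 0 < b := ha.trans hab
  have hm0 : 0 < m := Real.sqrt_pos.2 (by positivity)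
  have hmsq : m * m = a * b := Real.mul_self_sqrt (by positivity)
  have ham : a < m := by
    by_contra hcon
    push_neg at hcon
    nlinarith [hm0.le]
  have hmb : m < b := by
    by_contra hcon
    push_neg at hcon
    nlinarith [hm0.le]
  have hCq : ∀ u ∈ Set.Icc a b, |f' u| ^ q ≤ C ^ q := by
    intro u hu
    have key : ∀ x ∈ Set.Icc a b, ∀ y ∈ Set.Icc a b, ∀ t ∈ Set.Icc (0:ℝ) 1,
        x ^ t * y ^ (1 - t) = u → |f' u| ^ q ≤ max (|f' x| ^ q) (|f' y| ^ q) := by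
      intro x hx y hy t ht hrep
      have := hconv x hx y hy t ht
      rw [one_mul, one_mul, hrep] at this
      refine this.trans (combo_le_max (Real.rpow_nonneg ht.1 _) ?_)
      exact Real.rpow_le_one ht.1 ht.2 hα0.le
    have hmmem : m ∈ Set.Icc a b := ⟨ham.le, hmb.le⟩
    have hamem : a ∈ Set.Icc a b := ⟨le_rfl, hab.le⟩
    have hbmem : b ∈ Set.Icc a b := ⟨hab.le, le_rfl⟩
    have hCabs : ∀ z, z ∈ ({a, m, b} : Set ℝ) → |f' z| ≤ C := by
      intro z hz
      rcases hz with h | h | h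
      · rw [h]; exact le_max_left _ _
      · rw [h]; exact le_trans (le_max_left _ _) (le_max_right _ _)
      · rw [h]; exact le_trans (le_max_right _ _) (le_max_right _ _)
    have step : ∀ z w, |f' z| ≤ C → |f' w| ≤ C →
        max (|f' z| ^ q) (|f' w| ^ q) ≤ C ^ q := by
      intro z w hz hw
      apply max_le <;> exact Real.rpow_le_rpow (abs_nonneg _) (by assumption) hq0.le
    rcases le_total u m with hum | hmu
    · obtain ⟨t, ht, hrep⟩ := rep_aux ha ham ⟨hu.1, hum⟩
      exact (key m hmmem a hamem t ht hrep).trans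
        (step _ _ (hCabs m (by simp)) (hCabs a (by simp)))
    · obtain ⟨t, ht, hrep⟩ := rep_aux hm0 hmb ⟨hmu, hu.2⟩
      exact (key b hbmem m hmmem t ht hrep).trans
        (step _ _ (hCabs b (by simp)) (hCabs m (by simp)))
  intro u hu
  have h1 := hCq u hu
  have h2 : (|f' u| ^ q) ^ (1/q) ≤ (C ^ q) ^ (1/q) := by
    apply Real.rpow_le_rpow (Real.rpow_nonneg (abs_nonneg _) _) h1 (by positivity)
  have hC0 : 0 ≤ C := le_trans (abs_nonneg _) (le_max_left _ _)
  rwa [← Real.rpow_mul (abs_nonneg _), ← Real.rpow_mul hC0,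
    mul_one_div_cancel hq0.ne', Real.rpow_one, Real.rpow_one] at h2

end Aux

set_option maxHeartbeats 2000000 in
theorem stmt11 (I : Set ℝ) (hI : I ⊆ Set.Ioi 0) (f f' : ℝ → ℝ) (a b : ℝ)
    (ha : 0 < a) (hab : a < b)
    (hIcc : Set.Icc a b ⊆ interior I)
    (hdiff : ∀ y ∈ interior I, HasDerivAt f (f' y) y)
    (hint : IntervalIntegrable f' MeasureTheory.volume a b)
    (hfint : IntervalIntegrable (fun u => f u / u) MeasureTheory.volume a b)
    (α : ℝ) (hα : α ∈ Set.Ioc (0:ℝ) 1) (q : ℝ) (hq : 1 ≤ q)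
    (hconv : GAAlphaMConvexOn α 1 (Set.Icc a b) (fun u => |f' u| ^ q)) :
    |f (Real.sqrt (a * b)) - (1 / (Real.log b - Real.log a)) * ∫ u in a..b, f u / u| ≤
      Real.log (b / a) * (1 / 2 : ℝ) ^ (3 - 1 / q) *
        (a *
          (|f' (Real.sqrt (a * b))| ^ q * (∫ t in (0:ℝ)..1, t ^ (1 + α) * (b / a) ^ (q * t / 2))
            + |f' a| ^ q * (∫ t in (0:ℝ)..1, t * (1 - t ^ α) * (b / a) ^ (q * t / 2))) ^ (1 / q)
        + b *
          (|f' (Real.sqrt (a * b))| ^ q * (∫ t in (0:ℝ)..1, t ^ (1 + α) * (a / b) ^ (q * t / 2))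
            + |f' b| ^ q * (∫ t in (0:ℝ)..1, t * (1 - t ^ α) * (a / b) ^ (q * t / 2))) ^ (1 / q)) := by
  obtain ⟨hα0, hα1⟩ := hα
  have hq0 : 0 < q := lt_of_lt_of_le one_pos hq
  have hb0 : 0 < b := ha.trans hab
  set A := Real.log a with hA
  set B := Real.log b with hB
  have hAB : A < B := Real.log_lt_log ha hab
  set L : ℝ := B - A with hLdef
  have hL0 : 0 < L := sub_pos.2 hAB
  set M : ℝ := (A + B) / 2 with hMdef
  have hAM : A < M := by rw [hMdef]; linarith
  have hMB : M < B := by rw [hMdef]; linarith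
  set m := Real.sqrt (a * b) with hmdef
  have hm0 : 0 < m := Real.sqrt_pos.2 (by positivity)
  have hmsq : m * m = a * b := Real.mul_self_sqrt (by positivity)
  have ham : a < m := by by_contra hcon; push_neg at hcon; nlinarith [hm0.le]
  have hmb : m < b := by by_contra hcon; push_neg at hcon; nlinarith [hm0.le]
  have hlogm : Real.log m = M := by
    rw [hmdef, Real.log_sqrt (by positivity), Real.log_mul ha.ne' hb0.ne', ← hA, ← hB, hMdef]
  have hmexp : m = Real.exp M := by rw [← hlogm, Real.exp_log hm0]
  have haexp : Real.exp A = a := by rw [hA, Real.exp_log ha]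
  have hbexp : Real.exp B = b := by rw [hB, Real.exp_log hb0]
  have hlogba : Real.log (b / a) = L := by
    rw [Real.log_div hb0.ne' ha.ne', ← hA, ← hB, hLdef]
  have hlogab : Real.log (a / b) = -L := by
    rw [Real.log_div ha.ne' hb0.ne', ← hA, ← hB, hLdef]; ring
  have hmemIcc : ∀ v ∈ Set.Icc A B, Real.exp v ∈ Set.Icc a b := by
    intro v hv
    constructor
    · rw [← haexp]; exact Real.exp_le_exp.2 hv.1
    · rw [← hbexp]; exact Real.exp_le_exp.2 hv.2
  set g : ℝ → ℝ := fun v => f (Real.exp v) with hgdef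
  set g' : ℝ → ℝ := fun v => f' (Real.exp v) * Real.exp v with hg'def
  have hgderiv : ∀ v ∈ Set.Icc A B, HasDerivAt g (g' v) v := by
    intro v hv
    have h1 := hdiff (Real.exp v) (hIcc (hmemIcc v hv))
    have h2 := h1.comp v (Real.hasDerivAt_exp v)
    exact h2
  set C := max |f' a| (max |f' m| |f' b|) with hCdef
  have hC0 : 0 ≤ C := le_trans (abs_nonneg _) (le_max_left _ _)
  have hfb : ∀ u ∈ Set.Icc a b, |f' u| ≤ C := by
    rw [hCdef, hmdef]
    exact bound_aux f' a b ha hab α q hα0 hα1 hq0 hconv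
  have hgb : ∀ v ∈ Set.Icc A B, |g' v| ≤ C * b := by
    intro v hv
    rw [hg'def]
    simp only
    rw [abs_mul, abs_of_pos (Real.exp_pos v)]
    exact mul_le_mul (hfb _ (hmemIcc v hv)) (hmemIcc v hv).2 (Real.exp_pos v).le hC0
  have hf'eq : ∀ u ∈ Set.Icc a b, f' u = deriv f u := fun u hu => ((hdiff u (hIcc hu)).deriv).symm
  set G' : ℝ → ℝ := fun v => deriv f (Real.exp v) * Real.exp v with hG'def
  have hG'meas : Measurable G' :=
    ((measurable_deriv f).comp Real.measurable_exp).mul Real.measurable_exp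
  have hg'eqOn : ∀ v ∈ Set.Icc A B, g' v = G' v := by
    intro v hv
    rw [hg'def, hG'def]
    simp only
    rw [hf'eq _ (hmemIcc v hv)]
  have hg'int : IntervalIntegrable g' volume A B := by
    rw [intervalIntegrable_iff_integrableOn_Ioc_of_le hAB.le]
    have hmeas : AEStronglyMeasurable g' (volume.restrict (Set.Ioc A B)) := by
      refine (hG'meas.aestronglyMeasurable).congr ?_
      refine (ae_restrict_iff' measurableSet_Ioc).2 (Filter.Eventually.of_forall ?_)
      intro v hv
      exact (hg'eqOn v (Set.Ioc_subset_Icc_self hv)).symm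
    refine Integrable.mono' (integrable_const (C * b)) hmeas ?_
    refine (ae_restrict_iff' measurableSet_Ioc).2 (Filter.Eventually.of_forall ?_)
    intro v hv
    rw [Real.norm_eq_abs]
    exact hgb v (Set.Ioc_subset_Icc_self hv)
  have hgcont : ContinuousOn g (Set.Icc A B) :=
    fun v hv => ((hgderiv v hv).continuousAt).continuousWithinAt
  have hgint : IntervalIntegrable g volume A B := by
    apply ContinuousOn.intervalIntegrable
    rwa [Set.uIcc_of_le hAB.le]
  have huIccAB : Set.uIcc A B = Set.Icc A B := Set.uIcc_of_le hAB.le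
  have hsub1 : Set.uIcc A M ⊆ Set.Icc A B := by
    rw [Set.uIcc_of_le hAM.le]; exact Set.Icc_subset_Icc le_rfl hMB.le
  have hsub2 : Set.uIcc M B ⊆ Set.Icc A B := by
    rw [Set.uIcc_of_le hMB.le]; exact Set.Icc_subset_Icc hAM.le le_rfl
  have hsub1' : Set.uIcc A M ⊆ Set.uIcc A B := by rw [huIccAB]; exact hsub1
  have hsub2' : Set.uIcc M B ⊆ Set.uIcc A B := by rw [huIccAB]; exact hsub2
  -- substitution
  have hsubst : ∫ v in A..B, g v = ∫ u in a..b, f u / u := by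
    have hfc : ContinuousOn (fun u : ℝ => f u / u) (Real.exp '' Set.uIcc A B) := by
      intro u hu
      obtain ⟨v, hv, rfl⟩ := hu
      rw [huIccAB] at hv
      have hu' := hmemIcc v hv
      have hfc2 : ContinuousAt f (Real.exp v) := (hdiff _ (hIcc hu')).continuousAt
      exact (hfc2.continuousWithinAt.div continuousWithinAt_id (Real.exp_pos v).ne')
    have key := integral_comp_smul_deriv' (a := A) (b := B) (f := Real.exp)
      (f' := Real.exp) (g := fun u : ℝ => f u / u)
      (fun x _ => Real.hasDerivAt_exp x) Real.continuous_exp.continuousOn hfc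
    rw [haexp, hbexp] at key
    rw [← key]
    apply integral_congr
    intro v _
    simp only [Function.comp, smul_eq_mul, hgdef]
    field_simp
  -- integration by parts
  have hgM : g M = f m := by rw [hgdef]; simp only; rw [← hmexp]
  have ibp1 : ∫ v in A..M, (v - A) * g' v = (M - A) * g M - ∫ v in A..M, g v := by
    have h := intervalIntegral.integral_mul_deriv_eq_deriv_mul
      (u := fun v => v - A) (u' := fun _ => (1:ℝ)) (v := g) (v' := g')
      (fun x hx => (hasDerivAt_id x).sub_const A)
      (fun x hx => hgderiv x (hsub1 hx))
      intervalIntegrable_const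
      (hg'int.mono_set hsub1')
    simp only [one_mul, sub_self, zero_mul, sub_zero] at h
    exact h
  have ibp2 : ∫ v in M..B, (v - B) * g' v = (B - M) * g M - ∫ v in M..B, g v := by
    have h := intervalIntegral.integral_mul_deriv_eq_deriv_mul
      (u := fun v => v - B) (u' := fun _ => (1:ℝ)) (v := g) (v' := g')
      (fun x hx => (hasDerivAt_id x).sub_const B)
      (fun x hx => hgderiv x (hsub2 hx))
      intervalIntegrable_const
      (hg'int.mono_set hsub2')
    simp only [one_mul, sub_self, zero_mul, sub_zero, zero_sub] at h
    rw [h]; ring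
  have hsplit : (∫ v in A..M, g v) + ∫ v in M..B, g v = ∫ v in A..B, g v :=
    integral_add_adjacent_intervals (hgint.mono_set hsub1') (hgint.mono_set hsub2')
  have hiden : f m - 1 / L * ∫ u in a..b, f u / u =
      1 / L * ((∫ v in A..M, (v - A) * g' v) + ∫ v in M..B, (v - B) * g' v) := by
    rw [ibp1, ibp2, hgM, ← hsubst, ← hsplit]
    have : M - A = L / 2 := by rw [hMdef, hLdef]; ring
    have h2 : B - M = L / 2 := by rw [hMdef, hLdef]; ring
    rw [this, h2]
    field_simp
    ring
  -- side 1 setup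
  set φ₁ : ℝ → ℝ := fun t => |g' (L/2 * t + A)| with hφ₁def
  set φ₂ : ℝ → ℝ := fun t => |g' (-(L/2) * t + B)| with hφ₂def
  have hL2ne : (L/2 : ℝ) ≠ 0 := ne_of_gt (by positivity)
  have hmemt₁ : ∀ t ∈ Set.Icc (0:ℝ) 1, L/2 * t + A ∈ Set.Icc A B := by
    intro t ht
    constructor
    · nlinarith [mul_nonneg hL0.le ht.1]
    · nlinarith [mul_nonneg hL0.le (sub_nonneg.2 ht.2)]
  have hmemt₂ : ∀ t ∈ Set.Icc (0:ℝ) 1, -(L/2) * t + B ∈ Set.Icc A B := by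
    intro t ht
    constructor
    · nlinarith [mul_nonneg hL0.le (sub_nonneg.2 ht.2)]
    · nlinarith [mul_nonneg hL0.le ht.1]
  -- change of variables, side 1
  have hAM2 : ∫ v in A..M, (v - A) * |g' v| =
      L^2/4 * ∫ t in (0:ℝ)..1, t * φ₁ t := by
    have hcv := integral_comp_mul_add (a := 0) (b := 1)
      (f := fun v => (v - A) * |g' v|) hL2ne A
    rw [show L/2 * 0 + A = A from by ring,
      show L/2 * 1 + A = M from by rw [hLdef, hMdef]; ring] at hcv
    have e : ∫ t in (0:ℝ)..1, (L/2 * t + A - A) * |g' (L/2 * t + A)| =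
        ∫ t in (0:ℝ)..1, (L/2) * (t * φ₁ t) := by
      apply integral_congr
      intro t _
      rw [hφ₁def]
      ring
    rw [e, intervalIntegral.integral_const_mul, smul_eq_mul] at hcv
    calc ∫ v in A..M, (v - A) * |g' v|
        = (L/2) * ((L/2)⁻¹ * ∫ v in A..M, (v - A) * |g' v|) := by
          field_simp
      _ = (L/2) * ((L/2) * ∫ t in (0:ℝ)..1, t * φ₁ t) := by rw [← hcv]
      _ = L^2/4 * ∫ t in (0:ℝ)..1, t * φ₁ t := by ring
  -- change of variables, side 2
  have hMB2 : ∫ v in M..B, (B - v) * |g' v| =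
      L^2/4 * ∫ t in (0:ℝ)..1, t * φ₂ t := by
    have hcv := integral_comp_mul_add (a := 0) (b := 1)
      (f := fun v => (B - v) * |g' v|) (neg_ne_zero.2 hL2ne) B
    rw [show -(L/2) * 0 + B = B from by ring,
      show -(L/2) * 1 + B = M from by rw [hLdef, hMdef]; ring,
      integral_symm M B] at hcv
    have e : ∫ t in (0:ℝ)..1, (B - (-(L/2) * t + B)) * |g' (-(L/2) * t + B)| =
        ∫ t in (0:ℝ)..1, (L/2) * (t * φ₂ t) := by
      apply integral_congr
      intro t _
      rw [hφ₂def]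
      ring
    rw [e, intervalIntegral.integral_const_mul, smul_eq_mul] at hcv
    have h2 : (-(L/2))⁻¹ * -∫ v in M..B, (B - v) * |g' v| =
        (L/2)⁻¹ * ∫ v in M..B, (B - v) * |g' v| := by
      field_simp
    rw [h2] at hcv
    calc ∫ v in M..B, (B - v) * |g' v|
        = (L/2) * ((L/2)⁻¹ * ∫ v in M..B, (B - v) * |g' v|) := by
          field_simp
      _ = (L/2) * ((L/2) * ∫ t in (0:ℝ)..1, t * φ₂ t) := by rw [← hcv]
      _ = L^2/4 * ∫ t in (0:ℝ)..1, t * φ₂ t := by ring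
  have hP1 : |∫ v in A..M, (v - A) * g' v| ≤ L^2/4 * ∫ t in (0:ℝ)..1, t * φ₁ t := by
    calc |∫ v in A..M, (v - A) * g' v| ≤ ∫ v in A..M, |(v - A) * g' v| :=
          abs_integral_le_integral_abs hAM.le
      _ = ∫ v in A..M, (v - A) * |g' v| := by
          apply integral_congr
          intro v hv
          rw [Set.uIcc_of_le hAM.le] at hv
          simp only
          rw [abs_mul, abs_of_nonneg (sub_nonneg.2 hv.1)]
      _ = L^2/4 * ∫ t in (0:ℝ)..1, t * φ₁ t := hAM2
  have hP2 : |∫ v in M..B, (v - B) * g' v| ≤ L^2/4 * ∫ t in (0:ℝ)..1, t * φ₂ t := by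
    calc |∫ v in M..B, (v - B) * g' v| ≤ ∫ v in M..B, |(v - B) * g' v| :=
          abs_integral_le_integral_abs hMB.le
      _ = ∫ v in M..B, (B - v) * |g' v| := by
          apply integral_congr
          intro v hv
          rw [Set.uIcc_of_le hMB.le] at hv
          simp only
          rw [abs_mul, abs_sub_comm, abs_of_nonneg (sub_nonneg.2 hv.2)]
      _ = L^2/4 * ∫ t in (0:ℝ)..1, t * φ₂ t := hMB2
  -- measurability and bounds of φ₁, φ₂
  have hφ₁meas : AEStronglyMeasurable φ₁ (volume.restrict (Set.Ioc (0:ℝ) 1)) := by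
    have hm2 : Measurable fun t : ℝ => |G' (L/2 * t + A)| :=
      (hG'meas.comp ((measurable_id.const_mul (L/2)).add_const A)).abs
    refine hm2.aestronglyMeasurable.congr ?_
    refine (ae_restrict_iff' measurableSet_Ioc).2 (Filter.Eventually.of_forall ?_)
    intro t ht
    rw [hφ₁def]
    simp only
    rw [hg'eqOn _ (hmemt₁ t ⟨ht.1.le, ht.2⟩)]
  have hφ₂meas : AEStronglyMeasurable φ₂ (volume.restrict (Set.Ioc (0:ℝ) 1)) := by
    have hm2 : Measurable fun t : ℝ => |G' (-(L/2) * t + B)| :=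
      (hG'meas.comp ((measurable_id.const_mul (-(L/2))).add_const B)).abs
    refine hm2.aestronglyMeasurable.congr ?_
    refine (ae_restrict_iff' measurableSet_Ioc).2 (Filter.Eventually.of_forall ?_)
    intro t ht
    rw [hφ₂def]
    simp only
    rw [hg'eqOn _ (hmemt₂ t ⟨ht.1.le, ht.2⟩)]
  have hφ₁bd : ∀ t ∈ Set.Ioc (0:ℝ) 1, φ₁ t ≤ C * b := by
    intro t ht
    rw [hφ₁def]
    simp only
    exact hgb _ (hmemt₁ t ⟨ht.1.le, ht.2⟩)
  have hφ₂bd : ∀ t ∈ Set.Ioc (0:ℝ) 1, φ₂ t ≤ C * b := by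
    intro t ht
    rw [hφ₂def]
    simp only
    exact hgb _ (hmemt₂ t ⟨ht.1.le, ht.2⟩)
  have hφ₁0 : ∀ t, 0 ≤ φ₁ t := fun t => abs_nonneg _
  have hφ₂0 : ∀ t, 0 ≤ φ₂ t := fun t => abs_nonneg _
  -- Hölder
  have hold₁ : ∫ t in (0:ℝ)..1, t * φ₁ t ≤
      (1/2:ℝ)^(1 - 1/q) * (∫ t in (0:ℝ)..1, t * φ₁ t ^ q)^(1/q) := by
    rw [integral_of_le zero_le_one, integral_of_le zero_le_one]
    exact holder_step q hq φ₁ hφ₁0 hφ₁meas (C*b) hφ₁bd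
  have hold₂ : ∫ t in (0:ℝ)..1, t * φ₂ t ≤
      (1/2:ℝ)^(1 - 1/q) * (∫ t in (0:ℝ)..1, t * φ₂ t ^ q)^(1/q) := by
    rw [integral_of_le zero_le_one, integral_of_le zero_le_one]
    exact holder_step q hq φ₂ hφ₂0 hφ₂meas (C*b) hφ₂bd
  -- pointwise convexity bounds
  have hpt₁ : ∀ t ∈ Set.Icc (0:ℝ) 1, t * φ₁ t ^ q ≤
      a ^ q * (|f' m| ^ q * (t ^ (1 + α) * (b / a) ^ (q * t / 2))
        + |f' a| ^ q * (t * (1 - t ^ α) * (b / a) ^ (q * t / 2))) := by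
    intro t ht
    have hx : m ^ t * a ^ (1 - t) = Real.exp (L/2 * t + A) := by
      rw [Real.rpow_def_of_pos hm0, Real.rpow_def_of_pos ha, ← Real.exp_add, hlogm,
        ← hA]
      congr 1
      rw [hMdef, hLdef]
      ring
    have hc1 := hconv m ⟨ham.le, hmb.le⟩ a ⟨le_rfl, hab.le⟩ t ht
    simp only [one_mul] at hc1
    rw [hx] at hc1
    have hEq : φ₁ t ^ q = |f' (Real.exp (L/2 * t + A))| ^ q * (a ^ q * (b/a) ^ (q * t / 2)) := by
      rw [hφ₁def]
      simp only
      rw [hg'def]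
      simp only
      rw [abs_mul, abs_of_pos (Real.exp_pos _),
        Real.mul_rpow (abs_nonneg _) (Real.exp_pos _).le]
      congr 1
      rw [Real.rpow_def_of_pos (Real.exp_pos _), Real.log_exp,
        Real.rpow_def_of_pos ha, Real.rpow_def_of_pos (by positivity : (0:ℝ) < b/a), hlogba,
        ← hA, ← Real.exp_add]
      congr 1
      ring
    rw [hEq]
    calc t * (|f' (Real.exp (L/2 * t + A))| ^ q * (a ^ q * (b/a) ^ (q * t / 2)))
        ≤ t * ((t ^ α * |f' m| ^ q + (1 - t ^ α) * |f' a| ^ q) * (a ^ q * (b/a) ^ (q * t / 2))) := by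
          apply mul_le_mul_of_nonneg_left _ ht.1
          exact mul_le_mul_of_nonneg_right hc1 (by positivity)
      _ = a ^ q * (|f' m| ^ q * (t ^ (1 + α) * (b / a) ^ (q * t / 2))
            + |f' a| ^ q * (t * (1 - t ^ α) * (b / a) ^ (q * t / 2))) := by
          rw [Real.rpow_add' ht.1 (ne_of_gt (by linarith : (0:ℝ) < 1 + α)), Real.rpow_one]
          ring
  have hpt₂ : ∀ t ∈ Set.Icc (0:ℝ) 1, t * φ₂ t ^ q ≤
      b ^ q * (|f' m| ^ q * (t ^ (1 + α) * (a / b) ^ (q * t / 2))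
        + |f' b| ^ q * (t * (1 - t ^ α) * (a / b) ^ (q * t / 2))) := by
    intro t ht
    have hx : m ^ t * b ^ (1 - t) = Real.exp (-(L/2) * t + B) := by
      rw [Real.rpow_def_of_pos hm0, Real.rpow_def_of_pos hb0, ← Real.exp_add, hlogm,
        ← hB]
      congr 1
      rw [hMdef, hLdef]
      ring
    have hc1 := hconv m ⟨ham.le, hmb.le⟩ b ⟨hab.le, le_rfl⟩ t ht
    simp only [one_mul] at hc1
    rw [hx] at hc1
    have hEq : φ₂ t ^ q = |f' (Real.exp (-(L/2) * t + B))| ^ q * (b ^ q * (a/b) ^ (q * t / 2)) := by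
      rw [hφ₂def]
      simp only
      rw [hg'def]
      simp only
      rw [abs_mul, abs_of_pos (Real.exp_pos _),
        Real.mul_rpow (abs_nonneg _) (Real.exp_pos _).le]
      congr 1
      rw [Real.rpow_def_of_pos (Real.exp_pos _), Real.log_exp,
        Real.rpow_def_of_pos hb0, Real.rpow_def_of_pos (by positivity : (0:ℝ) < a/b), hlogab,
        ← hB, ← Real.exp_add]
      congr 1
      ring
    rw [hEq]
    calc t * (|f' (Real.exp (-(L/2) * t + B))| ^ q * (b ^ q * (a/b) ^ (q * t / 2)))
        ≤ t * ((t ^ α * |f' m| ^ q + (1 - t ^ α) * |f' b| ^ q) * (b ^ q * (a/b) ^ (q * t / 2))) := by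
          apply mul_le_mul_of_nonneg_left _ ht.1
          exact mul_le_mul_of_nonneg_right hc1 (by positivity)
      _ = b ^ q * (|f' m| ^ q * (t ^ (1 + α) * (a / b) ^ (q * t / 2))
            + |f' b| ^ q * (t * (1 - t ^ α) * (a / b) ^ (q * t / 2))) := by
          rw [Real.rpow_add' ht.1 (ne_of_gt (by linarith : (0:ℝ) < 1 + α)), Real.rpow_one]
          ring
  -- continuity facts
  have hcpow : Continuous fun t : ℝ => t ^ (1 + α) :=
    continuous_id.rpow_const (fun x => Or.inr (by linarith))
  have hcα : Continuous fun t : ℝ => t ^ α :=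
    continuous_id.rpow_const (fun x => Or.inr hα0.le)
  have hba : Continuous fun t : ℝ => (b / a) ^ (q * t / 2) :=
    Continuous.rpow continuous_const (by continuity) (fun x => Or.inl (by positivity))
  have hab' : Continuous fun t : ℝ => (a / b) ^ (q * t / 2) :=
    Continuous.rpow continuous_const (by continuity) (fun x => Or.inl (by positivity))
  have hcq : Continuous fun x : ℝ => x ^ q :=
    continuous_id.rpow_const (fun x => Or.inr hq0.le)
  -- integrability of the left-hand integrands
  have hLint : ∀ (φ : ℝ → ℝ), (∀ t, 0 ≤ φ t) →
      AEStronglyMeasurable φ (volume.restrict (Set.Ioc (0:ℝ) 1)) →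
      (∀ t ∈ Set.Ioc (0:ℝ) 1, φ t ≤ C * b) →
      IntervalIntegrable (fun t => t * φ t ^ q) volume 0 1 := by
    intro φ h0 hmeas hbd
    rw [intervalIntegrable_iff_integrableOn_Ioc_of_le zero_le_one]
    have hm3 : AEStronglyMeasurable (fun t => t * φ t ^ q)
        (volume.restrict (Set.Ioc (0:ℝ) 1)) :=
      aestronglyMeasurable_id.mul (hcq.comp_aestronglyMeasurable hmeas)
    refine Integrable.mono' (integrable_const (1 * (C * b) ^ q)) hm3 ?_
    refine (ae_restrict_iff' measurableSet_Ioc).2 (Filter.Eventually.of_forall ?_)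
    intro t ht
    rw [Real.norm_eq_abs, abs_of_nonneg (mul_nonneg ht.1.le (Real.rpow_nonneg (h0 t) _))]
    exact mul_le_mul ht.2 (Real.rpow_le_rpow (h0 t) (hbd t ht) hq0.le)
      (Real.rpow_nonneg (h0 t) _) zero_le_one
  have hRc₁ : Continuous fun t : ℝ => a ^ q *
      (|f' m| ^ q * (t ^ (1 + α) * (b / a) ^ (q * t / 2))
        + |f' a| ^ q * (t * (1 - t ^ α) * (b / a) ^ (q * t / 2))) :=
    continuous_const.mul ((continuous_const.mul (hcpow.mul hba)).add
      (continuous_const.mul ((continuous_id.mul (continuous_const.sub hcα)).mul hba)))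
  have hRc₂ : Continuous fun t : ℝ => b ^ q *
      (|f' m| ^ q * (t ^ (1 + α) * (a / b) ^ (q * t / 2))
        + |f' b| ^ q * (t * (1 - t ^ α) * (a / b) ^ (q * t / 2))) :=
    continuous_const.mul ((continuous_const.mul (hcpow.mul hab')).add
      (continuous_const.mul ((continuous_id.mul (continuous_const.sub hcα)).mul hab')))
  -- integral comparisons
  have hQ1 : ∫ t in (0:ℝ)..1, t * φ₁ t ^ q ≤ a ^ q *
      (|f' m| ^ q * (∫ t in (0:ℝ)..1, t ^ (1 + α) * (b / a) ^ (q * t / 2))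
        + |f' a| ^ q * (∫ t in (0:ℝ)..1, t * (1 - t ^ α) * (b / a) ^ (q * t / 2))) := by
    have hmono := intervalIntegral.integral_mono_on zero_le_one
      (hLint φ₁ hφ₁0 hφ₁meas hφ₁bd) (hRc₁.intervalIntegrable 0 1) hpt₁
    refine hmono.trans (le_of_eq ?_)
    rw [intervalIntegral.integral_const_mul]
    congr 1
    have hi1 : IntervalIntegrable
        (fun t : ℝ => |f' m| ^ q * (t ^ (1 + α) * (b / a) ^ (q * t / 2))) volume 0 1 :=
      (continuous_const.mul (hcpow.mul hba)).intervalIntegrable 0 1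
    have hi2 : IntervalIntegrable
        (fun t : ℝ => |f' a| ^ q * (t * (1 - t ^ α) * (b / a) ^ (q * t / 2))) volume 0 1 :=
      (continuous_const.mul ((continuous_id'.mul (continuous_const.sub hcα)).mul
        hba)).intervalIntegrable 0 1
    rw [integral_add hi1 hi2, intervalIntegral.integral_const_mul, intervalIntegral.integral_const_mul]
  have hQ2 : ∫ t in (0:ℝ)..1, t * φ₂ t ^ q ≤ b ^ q *
      (|f' m| ^ q * (∫ t in (0:ℝ)..1, t ^ (1 + α) * (a / b) ^ (q * t / 2))
        + |f' b| ^ q * (∫ t in (0:ℝ)..1, t * (1 - t ^ α) * (a / b) ^ (q * t / 2))) := by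
    have hmono := intervalIntegral.integral_mono_on zero_le_one
      (hLint φ₂ hφ₂0 hφ₂meas hφ₂bd) (hRc₂.intervalIntegrable 0 1) hpt₂
    refine hmono.trans (le_of_eq ?_)
    rw [intervalIntegral.integral_const_mul]
    congr 1
    have hi1 : IntervalIntegrable
        (fun t : ℝ => |f' m| ^ q * (t ^ (1 + α) * (a / b) ^ (q * t / 2))) volume 0 1 :=
      (continuous_const.mul (hcpow.mul hab')).intervalIntegrable 0 1
    have hi2 : IntervalIntegrable
        (fun t : ℝ => |f' b| ^ q * (t * (1 - t ^ α) * (a / b) ^ (q * t / 2))) volume 0 1 :=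
      (continuous_const.mul ((continuous_id'.mul (continuous_const.sub hcα)).mul
        hab')).intervalIntegrable 0 1
    rw [integral_add hi1 hi2, intervalIntegral.integral_const_mul, intervalIntegral.integral_const_mul]
  -- nonnegativity
  have hQ1nn : 0 ≤ ∫ t in (0:ℝ)..1, t * φ₁ t ^ q :=
    intervalIntegral.integral_nonneg zero_le_one
      (fun t ht => mul_nonneg ht.1 (Real.rpow_nonneg (hφ₁0 t) _))
  have hQ2nn : 0 ≤ ∫ t in (0:ℝ)..1, t * φ₂ t ^ q :=
    intervalIntegral.integral_nonneg zero_le_one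
      (fun t ht => mul_nonneg ht.1 (Real.rpow_nonneg (hφ₂0 t) _))
  have hC1nn : ∀ c : ℝ, 0 < c → 0 ≤ ∫ t in (0:ℝ)..1, t ^ (1 + α) * c ^ (q * t / 2) :=
    fun c hc => intervalIntegral.integral_nonneg zero_le_one
      (fun t ht => mul_nonneg (Real.rpow_nonneg ht.1 _) (Real.rpow_nonneg hc.le _))
  have hC2nn : ∀ c : ℝ, 0 < c → 0 ≤ ∫ t in (0:ℝ)..1, t * (1 - t ^ α) * c ^ (q * t / 2) :=
    fun c hc => intervalIntegral.integral_nonneg zero_le_one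
      (fun t ht => mul_nonneg (mul_nonneg ht.1
        (sub_nonneg.2 (Real.rpow_le_one ht.1 ht.2 hα0.le))) (Real.rpow_nonneg hc.le _))
  have hS1nn : 0 ≤ |f' m| ^ q * (∫ t in (0:ℝ)..1, t ^ (1 + α) * (b / a) ^ (q * t / 2))
      + |f' a| ^ q * (∫ t in (0:ℝ)..1, t * (1 - t ^ α) * (b / a) ^ (q * t / 2)) :=
    add_nonneg (mul_nonneg (Real.rpow_nonneg (abs_nonneg _) _) (hC1nn _ (by positivity)))
      (mul_nonneg (Real.rpow_nonneg (abs_nonneg _) _) (hC2nn _ (by positivity)))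
  have hS2nn : 0 ≤ |f' m| ^ q * (∫ t in (0:ℝ)..1, t ^ (1 + α) * (a / b) ^ (q * t / 2))
      + |f' b| ^ q * (∫ t in (0:ℝ)..1, t * (1 - t ^ α) * (a / b) ^ (q * t / 2)) :=
    add_nonneg (mul_nonneg (Real.rpow_nonneg (abs_nonneg _) _) (hC1nn _ (by positivity)))
      (mul_nonneg (Real.rpow_nonneg (abs_nonneg _) _) (hC2nn _ (by positivity)))
  -- rpow algebra
  have hY₁ : (∫ t in (0:ℝ)..1, t * φ₁ t ^ q) ^ (1/q) ≤ a *
      (|f' m| ^ q * (∫ t in (0:ℝ)..1, t ^ (1 + α) * (b / a) ^ (q * t / 2))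
        + |f' a| ^ q * (∫ t in (0:ℝ)..1, t * (1 - t ^ α) * (b / a) ^ (q * t / 2))) ^ (1/q) := by
    calc (∫ t in (0:ℝ)..1, t * φ₁ t ^ q) ^ (1/q)
        ≤ (a ^ q * (|f' m| ^ q * (∫ t in (0:ℝ)..1, t ^ (1 + α) * (b / a) ^ (q * t / 2))
            + |f' a| ^ q * (∫ t in (0:ℝ)..1, t * (1 - t ^ α) * (b / a) ^ (q * t / 2)))) ^ (1/q) :=
          Real.rpow_le_rpow hQ1nn hQ1 (by positivity)
      _ = _ := by
          rw [Real.mul_rpow (by positivity) hS1nn, ← Real.rpow_mul ha.le,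
            mul_one_div_cancel hq0.ne', Real.rpow_one]
  have hY₂ : (∫ t in (0:ℝ)..1, t * φ₂ t ^ q) ^ (1/q) ≤ b *
      (|f' m| ^ q * (∫ t in (0:ℝ)..1, t ^ (1 + α) * (a / b) ^ (q * t / 2))
        + |f' b| ^ q * (∫ t in (0:ℝ)..1, t * (1 - t ^ α) * (a / b) ^ (q * t / 2))) ^ (1/q) := by
    calc (∫ t in (0:ℝ)..1, t * φ₂ t ^ q) ^ (1/q)
        ≤ (b ^ q * (|f' m| ^ q * (∫ t in (0:ℝ)..1, t ^ (1 + α) * (a / b) ^ (q * t / 2))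
            + |f' b| ^ q * (∫ t in (0:ℝ)..1, t * (1 - t ^ α) * (a / b) ^ (q * t / 2)))) ^ (1/q) :=
          Real.rpow_le_rpow hQ2nn hQ2 (by positivity)
      _ = _ := by
          rw [Real.mul_rpow (by positivity) hS2nn, ← Real.rpow_mul hb0.le,
            mul_one_div_cancel hq0.ne', Real.rpow_one]
  have hhalf : (0:ℝ) ≤ (1/2:ℝ)^(1 - 1/q) := Real.rpow_nonneg (by norm_num) _
  have hside₁ : ∫ t in (0:ℝ)..1, t * φ₁ t ≤ (1/2:ℝ)^(1 - 1/q) * (a *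
      (|f' m| ^ q * (∫ t in (0:ℝ)..1, t ^ (1 + α) * (b / a) ^ (q * t / 2))
        + |f' a| ^ q * (∫ t in (0:ℝ)..1, t * (1 - t ^ α) * (b / a) ^ (q * t / 2))) ^ (1/q)) :=
    hold₁.trans (mul_le_mul_of_nonneg_left hY₁ hhalf)
  have hside₂ : ∫ t in (0:ℝ)..1, t * φ₂ t ≤ (1/2:ℝ)^(1 - 1/q) * (b *
      (|f' m| ^ q * (∫ t in (0:ℝ)..1, t ^ (1 + α) * (a / b) ^ (q * t / 2))
        + |f' b| ^ q * (∫ t in (0:ℝ)..1, t * (1 - t ^ α) * (a / b) ^ (q * t / 2))) ^ (1/q)) :=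
    hold₂.trans (mul_le_mul_of_nonneg_left hY₂ hhalf)
  -- final assembly
  have h24 : (1/2:ℝ) ^ ((3:ℝ) - 1/q) = (1/4) * (1/2:ℝ)^(1 - 1/q) := by
    rw [show (3:ℝ) - 1/q = 2 + (1 - 1/q) by ring,
      Real.rpow_add (by norm_num : (0:ℝ) < 1/2),
      show ((2:ℝ)) = ((2:ℕ):ℝ) from by norm_num, Real.rpow_natCast]
    norm_num
  set Y1 := (|f' m| ^ q * (∫ t in (0:ℝ)..1, t ^ (1 + α) * (b / a) ^ (q * t / 2))
      + |f' a| ^ q * (∫ t in (0:ℝ)..1, t * (1 - t ^ α) * (b / a) ^ (q * t / 2))) ^ (1/q) with hY1def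
  set Y2 := (|f' m| ^ q * (∫ t in (0:ℝ)..1, t ^ (1 + α) * (a / b) ^ (q * t / 2))
      + |f' b| ^ q * (∫ t in (0:ℝ)..1, t * (1 - t ^ α) * (a / b) ^ (q * t / 2))) ^ (1/q) with hY2def
  set P1 := ∫ t in (0:ℝ)..1, t * φ₁ t with hP1def
  set P2 := ∫ t in (0:ℝ)..1, t * φ₂ t with hP2def
  set I1 := ∫ v in A..M, (v - A) * g' v with hI1def
  set I2 := ∫ v in M..B, (v - B) * g' v with hI2def
  rw [hlogba, hiden]
  have hLinv : (0:ℝ) < 1/L := by positivity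
  calc |1/L * (I1 + I2)|
      = 1/L * |I1 + I2| := by rw [abs_mul, abs_of_pos hLinv]
    _ ≤ 1/L * (|I1| + |I2|) :=
        mul_le_mul_of_nonneg_left (abs_add_le _ _) hLinv.le
    _ ≤ 1/L * ((L^2/4 * P1) + (L^2/4 * P2)) :=
        mul_le_mul_of_nonneg_left (add_le_add hP1 hP2) hLinv.le
    _ ≤ 1/L * ((L^2/4 * ((1/2:ℝ)^(1 - 1/q) * (a * Y1)))
          + (L^2/4 * ((1/2:ℝ)^(1 - 1/q) * (b * Y2)))) := by
        refine mul_le_mul_of_nonneg_left (add_le_add ?_ ?_) hLinv.le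
        · exact mul_le_mul_of_nonneg_left hside₁ (by positivity)
        · exact mul_le_mul_of_nonneg_left hside₂ (by positivity)
    _ = L * (1/2:ℝ) ^ ((3:ℝ) - 1/q) * (a * Y1 + b * Y2) := by
        rw [h24]
        field_simp
end

section
/- Let f : I ⊆ (0,∞) → ℝ be differentiable with |f'|^q GA-convex on [a,b] for q ≥ 1, a < b. Then |f(√(ab)) − (1/(ln b − ln a)) ∫ₐᵇ f(x)/x dx| ≤ ln(b/a)·(1/2)^{3−1/q} { a [|f'(√(ab))|^q ∫₀¹ t²(b/a)^{qt/2} dt + |f'(a)|^q ∫₀¹ t(1−t)(b/a)^{qt/2} dt]^{1/q} + b [|f'(√(ab))|^q ∫₀¹ t²(a/b)^{qt/2} dt + |f'(b)|^q ∫₀¹ t(1−t)(a/b)^{qt/2} dt]^{1/q} }. -/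
open MeasureTheory intervalIntegral Set

lemma aux_finite : IsFiniteMeasure (volume.restrict (Set.Ioc (0:ℝ) 1)) := by
  constructor; simp [Real.volume_Ioc]

lemma aux_integrable01 {ψ : ℝ → ℝ}
    (hmeas : AEStronglyMeasurable ψ (volume.restrict (Set.Ioc (0:ℝ) 1)))
    {K : ℝ} (hbd : ∀ s ∈ Set.Ioc (0:ℝ) 1, |ψ s| ≤ K) :
    IntervalIntegrable ψ volume 0 1 := by
  haveI := aux_finite
  rw [intervalIntegrable_iff_integrableOn_Ioc_of_le zero_le_one]
  refine memLp_one_iff_integrable.mp (MemLp.of_bound hmeas K ?_)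
  rw [ae_restrict_iff' measurableSet_Ioc]
  exact Filter.Eventually.of_forall fun s hs => by
    simpa [Real.norm_eq_abs] using hbd s hs

lemma aux_hoelder01 {q : ℝ} (hq : 1 ≤ q) {φ : ℝ → ℝ} (hφ : ∀ s, 0 ≤ φ s)
    (hmeas : AEStronglyMeasurable φ (volume.restrict (Set.Ioc (0:ℝ) 1)))
    {K : ℝ} (hbd : ∀ s ∈ Set.Icc (0:ℝ) 1, φ s ≤ K) :
    ∫ s in (0:ℝ)..1, s * φ s
      ≤ (1/2 : ℝ) ^ (1 - 1/q) * (∫ s in (0:ℝ)..1, s * φ s ^ q) ^ (1/q) := by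
  haveI := aux_finite
  rcases eq_or_lt_of_le hq with rfl | hq1
  · simp [Real.rpow_one]
  have hq0 : 0 < q := lt_trans one_pos hq1
  set p : ℝ := q / (q - 1) with hp_def
  have hpq : p.HolderConjugate q := (Real.HolderConjugate.conjExponent hq1).symm
  have hp0 : 0 < p := hpq.pos
  have hp1 : 1/p = 1 - 1/q := by
    have := hpq.inv_add_inv_eq_one
    rw [inv_eq_one_div, inv_eq_one_div] at this
    linarith
  set μ := volume.restrict (Set.Ioc (0:ℝ) 1) with hμ
  set u : ℝ → ℝ := fun s => s ^ (1/p) with hu_def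
  set v : ℝ → ℝ := fun s => s ^ (1/q) * φ s with hv_def
  have hK0 : 0 ≤ K := le_trans (hφ 1) (hbd 1 (by norm_num))
  have humeas : AEStronglyMeasurable u μ :=
    (measurable_id.pow_const _).aestronglyMeasurable
  have hvmeas : AEStronglyMeasurable v μ :=
    ((measurable_id.pow_const _).aestronglyMeasurable).mul hmeas
  have hu : MemLp u (ENNReal.ofReal p) μ := by
    refine MemLp.of_bound humeas 1 ?_
    rw [ae_restrict_iff' measurableSet_Ioc]
    refine Filter.Eventually.of_forall fun s hs => ?_
    rw [Real.norm_eq_abs, abs_of_nonneg (Real.rpow_nonneg hs.1.le _)]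
    exact Real.rpow_le_one hs.1.le hs.2 (by positivity)
  have hv : MemLp v (ENNReal.ofReal q) μ := by
    refine MemLp.of_bound hvmeas K ?_
    rw [ae_restrict_iff' measurableSet_Ioc]
    refine Filter.Eventually.of_forall fun s hs => ?_
    rw [Real.norm_eq_abs, abs_of_nonneg (mul_nonneg (Real.rpow_nonneg hs.1.le _) (hφ s))]
    calc s ^ (1/q) * φ s ≤ 1 * K := by
          refine mul_le_mul ?_ (hbd s ⟨hs.1.le, hs.2⟩) (hφ s) zero_le_one
          exact Real.rpow_le_one hs.1.le hs.2 (by positivity)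
      _ = K := one_mul K
  have hu0 : 0 ≤ᶠ[ae μ] u := by
    rw [hμ, Filter.EventuallyLE, ae_restrict_iff' measurableSet_Ioc]
    exact Filter.Eventually.of_forall fun s hs => Real.rpow_nonneg hs.1.le _
  have hv0 : 0 ≤ᶠ[ae μ] v := by
    rw [hμ, Filter.EventuallyLE, ae_restrict_iff' measurableSet_Ioc]
    exact Filter.Eventually.of_forall fun s hs =>
      mul_nonneg (Real.rpow_nonneg hs.1.le _) (hφ s)
  have key := MeasureTheory.integral_mul_le_Lp_mul_Lq_of_nonneg hpq hu0 hv0 hu hv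
  have e1 : ∫ s, u s * v s ∂μ = ∫ s in (0:ℝ)..1, s * φ s := by
    rw [intervalIntegral.integral_of_le zero_le_one]
    refine setIntegral_congr_fun measurableSet_Ioc fun s hs => ?_
    have h1 : u s * v s = (s ^ (1/p) * s ^ (1/q)) * φ s := by simp [hu_def, hv_def]; ring
    rw [h1, ← Real.rpow_add hs.1, hp1]
    norm_num
  have e2 : ∫ s, u s ^ p ∂μ = (1/2 : ℝ) := by
    have : ∫ s, u s ^ p ∂μ = ∫ s in (0:ℝ)..1, s := by
      rw [intervalIntegral.integral_of_le zero_le_one]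
      refine setIntegral_congr_fun measurableSet_Ioc fun s hs => ?_
      show (s ^ (1/p)) ^ p = s
      rw [← Real.rpow_mul hs.1.le, one_div, inv_mul_cancel₀ (ne_of_gt hp0), Real.rpow_one]
    rw [this, integral_id]
    norm_num
  have e3 : ∫ s, v s ^ q ∂μ = ∫ s in (0:ℝ)..1, s * φ s ^ q := by
    rw [intervalIntegral.integral_of_le zero_le_one]
    refine setIntegral_congr_fun measurableSet_Ioc fun s hs => ?_
    show (s ^ (1/q) * φ s) ^ q = s * φ s ^ q
    rw [Real.mul_rpow (Real.rpow_nonneg hs.1.le _) (hφ s),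
      ← Real.rpow_mul hs.1.le, one_div, inv_mul_cancel₀ (ne_of_gt hq0), Real.rpow_one]
  rw [e1, e2, e3, hp1] at key
  exact key

lemma aux_comp_meas (g : ℝ → ℝ) {c d : ℝ} (hd : d ≠ 0) {u v : ℝ}
    (him : ∀ s ∈ Set.Icc (0:ℝ) 1, Real.exp (d * s + c) ∈ Set.Icc u v)
    (hg : IntegrableOn g (Set.Icc u v) volume) :
    AEStronglyMeasurable (fun s => g (Real.exp (d * s + c)))
      (volume.restrict (Set.Ioc (0:ℝ) 1)) := by
  set T : ℝ → ℝ := fun s => Real.exp (d * s + c) with hT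
  have hderiv : ∀ s ∈ Set.Icc (0:ℝ) 1,
      HasDerivWithinAt T (Real.exp (d * s + c) * d) (Set.Icc (0:ℝ) 1) s := by
    intro s _
    have h := ((Real.hasDerivAt_exp _).comp s
      (((hasDerivAt_id s).const_mul d).add_const c))
    simp only [id_eq, mul_one] at h
    exact h.hasDerivWithinAt
  have hinj : Set.InjOn T (Set.Icc (0:ℝ) 1) := by
    intro x _ y _ hxy
    have := Real.exp_injective hxy
    have : d * x = d * y := by linarith [this]
    exact mul_left_cancel₀ hd this
  have hsub : T '' Set.Icc (0:ℝ) 1 ⊆ Set.Icc u v := Set.image_subset_iff.mpr him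
  have hInt : IntegrableOn (fun s => |Real.exp (d * s + c) * d| • g (T s))
      (Set.Icc (0:ℝ) 1) volume := by
    exact (MeasureTheory.integrableOn_image_iff_integrableOn_abs_deriv_smul
      measurableSet_Icc hderiv hinj g).mp (hg.mono_set hsub)
  have h1 : AEStronglyMeasurable (fun s => |Real.exp (d * s + c) * d| * g (T s))
      (volume.restrict (Set.Icc (0:ℝ) 1)) := hInt.aestronglyMeasurable
  have hcont : Continuous fun s : ℝ => (|Real.exp (d * s + c) * d|)⁻¹ := by
    refine Continuous.inv₀ (Continuous.abs (by continuity)) fun s => ?_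
    positivity
  have h2 : AEStronglyMeasurable (fun s => g (T s))
      (volume.restrict (Set.Icc (0:ℝ) 1)) := by
    have := (hcont.aestronglyMeasurable (μ := volume.restrict (Set.Icc (0:ℝ) 1))).mul h1
    refine this.congr (Filter.Eventually.of_forall fun s => ?_)
    have hne : |Real.exp (d * s + c) * d| ≠ 0 := by positivity
    simp only [Pi.mul_apply]; field_simp
  exact h2.mono_measure (Measure.restrict_mono Set.Ioc_subset_Icc_self le_rfl)

set_option maxHeartbeats 1000000 in
theorem stmt12 (I : Set ℝ) (hI : I ⊆ Set.Ioi 0) (f f' : ℝ → ℝ) (a b : ℝ)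
    (ha : 0 < a) (hab : a < b)
    (hIcc : Set.Icc a b ⊆ interior I)
    (hdiff : ∀ y ∈ interior I, HasDerivAt f (f' y) y)
    (hint : IntervalIntegrable f' MeasureTheory.volume a b)
    (hfint : IntervalIntegrable (fun u => f u / u) MeasureTheory.volume a b)
    (q : ℝ) (hq : 1 ≤ q)
    (hconv : GAConvexOn (Set.Icc a b) (fun u => |f' u| ^ q)) :
    |f (Real.sqrt (a * b)) - (1 / (Real.log b - Real.log a)) * ∫ u in a..b, f u / u| ≤
      Real.log (b / a) * (1 / 2 : ℝ) ^ (3 - 1 / q) *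
        (a *
          (|f' (Real.sqrt (a * b))| ^ q * (∫ t in (0:ℝ)..1, t ^ (2:ℕ) * (b / a) ^ (q * t / 2))
            + |f' a| ^ q * (∫ t in (0:ℝ)..1, t * (1 - t) * (b / a) ^ (q * t / 2))) ^ (1 / q)
        + b *
          (|f' (Real.sqrt (a * b))| ^ q * (∫ t in (0:ℝ)..1, t ^ (2:ℕ) * (a / b) ^ (q * t / 2))
            + |f' b| ^ q * (∫ t in (0:ℝ)..1, t * (1 - t) * (a / b) ^ (q * t / 2))) ^ (1 / q)) := by
  have hb : 0 < b := lt_trans ha hab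
  set A := Real.log a with hA
  set B := Real.log b with hB
  have hAB : A < B := Real.log_lt_log ha hab
  set L : ℝ := B - A with hLdef
  have hL : 0 < L := sub_pos.mpr hAB
  set c : ℝ := A + L / 2 with hc
  set M := Real.sqrt (a * b) with hM
  have hMpos : 0 < M := Real.sqrt_pos.mpr (by positivity)
  have hlogM : Real.log M = c := by
    rw [hM, Real.log_sqrt (by positivity), Real.log_mul (ne_of_gt ha) (ne_of_gt hb)]
    rw [hc, hLdef]; ring
  have hexpA : Real.exp A = a := Real.exp_log ha
  have hexpB : Real.exp B = b := Real.exp_log hb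
  have hexpc : Real.exp c = M := by rw [← hlogM, Real.exp_log hMpos]
  have hAc : A ≤ c := by rw [hc]; linarith
  have hcB : c ≤ B := by rw [hc, hLdef]; linarith
  have hmemIcc : ∀ w ∈ Set.Icc A B, Real.exp w ∈ Set.Icc a b := by
    intro w hw
    constructor
    · rw [← hexpA]; exact Real.exp_le_exp.mpr hw.1
    · rw [← hexpB]; exact Real.exp_le_exp.mpr hw.2
  have hMmem : M ∈ Set.Icc a b := by
    rw [← hexpc]; exact hmemIcc c ⟨hAc, hcB⟩
  have hamem : a ∈ Set.Icc a b := ⟨le_rfl, hab.le⟩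
  have hbmem : b ∈ Set.Icc a b := ⟨hab.le, le_rfl⟩
  set h : ℝ → ℝ := fun w => f (Real.exp w) with hh
  set h' : ℝ → ℝ := fun w => Real.exp w * f' (Real.exp w) with hh'
  have hhderiv : ∀ w ∈ Set.Icc A B, HasDerivAt h (h' w) w := by
    intro w hw
    have hx := hdiff _ (hIcc (hmemIcc w hw))
    have := hx.comp w (Real.hasDerivAt_exp w)
    simpa [hh, hh', mul_comm, Function.comp_def] using this
  -- integrability of f' and f on Icc a b
  have hf'ab : IntegrableOn f' (Set.Icc a b) volume :=
    (integrableOn_Icc_iff_integrableOn_Ioc).mpr hint.1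
  have hfab : IntegrableOn (fun u => f u / u) (Set.Icc a b) volume :=
    (integrableOn_Icc_iff_integrableOn_Ioc).mpr hfint.1
  -- change of variable by exp
  have hexpderiv : ∀ w ∈ Set.Icc A B, HasDerivWithinAt Real.exp (Real.exp w) (Set.Icc A B) w :=
    fun w _ => (Real.hasDerivAt_exp w).hasDerivWithinAt
  have hexpinj : Set.InjOn Real.exp (Set.Icc A B) := Real.exp_injective.injOn
  have himg : Real.exp '' Set.Icc A B = Set.Icc a b := by
    apply Set.Subset.antisymm
    · exact Set.image_subset_iff.mpr hmemIcc
    · intro u hu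
      have hu0 : 0 < u := lt_of_lt_of_le ha hu.1
      refine ⟨Real.log u, ⟨?_, ?_⟩, Real.exp_log hu0⟩
      · rw [hA]; exact Real.log_le_log ha hu.1
      · rw [hB]; exact Real.log_le_log hu0 hu.2
  have hhInt : IntegrableOn h (Set.Icc A B) volume := by
    have h1 := (MeasureTheory.integrableOn_image_iff_integrableOn_abs_deriv_smul
      measurableSet_Icc hexpderiv hexpinj (fun u => f u / u)).mp (by rw [himg]; exact hfab)
    refine h1.congr_fun (fun w _ => ?_) measurableSet_Icc
    have := Real.exp_pos w
    simp only [smul_eq_mul, abs_of_pos this, hh]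
    field_simp
  have hh'Int : IntegrableOn h' (Set.Icc A B) volume := by
    have h1 := (MeasureTheory.integrableOn_image_iff_integrableOn_abs_deriv_smul
      measurableSet_Icc hexpderiv hexpinj f').mp (by rw [himg]; exact hf'ab)
    refine h1.congr_fun (fun w _ => ?_) measurableSet_Icc
    simp [smul_eq_mul, abs_of_pos (Real.exp_pos w), hh']
  have hsub1 : Set.Icc A c ⊆ Set.Icc A B := Set.Icc_subset_Icc le_rfl hcB
  have hsub2 : Set.Icc c B ⊆ Set.Icc A B := Set.Icc_subset_Icc hAc le_rfl
  have hhI1 : IntervalIntegrable h volume A c := by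
    rw [intervalIntegrable_iff_integrableOn_Ioc_of_le hAc]
    exact (hhInt.mono_set hsub1).mono_set Set.Ioc_subset_Icc_self
  have hhI2 : IntervalIntegrable h volume c B := by
    rw [intervalIntegrable_iff_integrableOn_Ioc_of_le hcB]
    exact (hhInt.mono_set hsub2).mono_set Set.Ioc_subset_Icc_self
  have hh'I1 : IntervalIntegrable h' volume A c := by
    rw [intervalIntegrable_iff_integrableOn_Ioc_of_le hAc]
    exact (hh'Int.mono_set hsub1).mono_set Set.Ioc_subset_Icc_self
  have hh'I2 : IntervalIntegrable h' volume c B := by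
    rw [intervalIntegrable_iff_integrableOn_Ioc_of_le hcB]
    exact (hh'Int.mono_set hsub2).mono_set Set.Ioc_subset_Icc_self
  have key1 : ∫ u in a..b, f u / u = ∫ w in A..B, h w := by
    rw [integral_of_le hab.le, integral_of_le hAB.le,
      ← MeasureTheory.integral_Icc_eq_integral_Ioc, ← MeasureTheory.integral_Icc_eq_integral_Ioc,
      ← himg, MeasureTheory.integral_image_eq_integral_abs_deriv_smul
        measurableSet_Icc hexpderiv hexpinj]
    refine setIntegral_congr_fun measurableSet_Icc fun w _ => ?_
    have := Real.exp_pos w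
    simp only [smul_eq_mul, abs_of_pos this, hh]
    field_simp
  set T1 : ℝ := ∫ w in A..c, (w - A) * h' w with hT1
  set T2 : ℝ := ∫ w in c..B, (B - w) * h' w with hT2
  have parts1 : T1 = (c - A) * h c - ∫ w in A..c, h w := by
    have hres := intervalIntegral.integral_mul_deriv_eq_deriv_mul
      (u := fun w => w - A) (u' := fun _ => (1:ℝ)) (v := h) (v' := h')
      (fun x _ => (hasDerivAt_id x).sub_const A)
      (fun x hx => hhderiv x (hsub1 (by rwa [Set.uIcc_of_le hAc] at hx)))
      intervalIntegrable_const hh'I1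
    rw [hT1, hres]
    simp
  have parts2 : T2 = -((B - c) * h c) + ∫ w in c..B, h w := by
    have hres := intervalIntegral.integral_mul_deriv_eq_deriv_mul
      (u := fun w => B - w) (u' := fun _ => (-1:ℝ)) (v := h) (v' := h')
      (fun x _ => (hasDerivAt_id x).const_sub B)
      (fun x hx => hhderiv x (hsub2 (by rwa [Set.uIcc_of_le hcB] at hx)))
      intervalIntegrable_const hh'I2
    rw [hT2, hres]
    simp
  have hsplit : (∫ w in A..c, h w) + ∫ w in c..B, h w = ∫ w in A..B, h w :=
    integral_add_adjacent_intervals hhI1 hhI2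
  have hidentity : f M - (1 / L) * ∫ u in a..b, f u / u = (1 / L) * (T1 - T2) := by
    have h1 : T1 - T2 = L * f M - ∫ u in a..b, f u / u := by
      rw [parts1, parts2, key1, ← hsplit]
      have : h c = f M := by rw [hh]; simp [hexpc]
      rw [this, hc, hLdef]
      ring
    rw [h1]
    field_simp
  -- global bound on |f'| over [a,b]
  set K : ℝ := max |f' a| |f' b| with hKdef
  have hK0 : 0 ≤ K := le_trans (abs_nonneg _) (le_max_left _ _)
  have hq0 : 0 < q := lt_of_lt_of_le one_pos hq
  have hKbd : ∀ u ∈ Set.Icc a b, |f' u| ≤ K := by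
    intro u hu
    have hu0 : 0 < u := lt_of_lt_of_le ha hu.1
    set t := Real.log (u / a) / L with ht
    have hlog0 : 0 ≤ Real.log (u / a) := Real.log_nonneg ((one_le_div ha).mpr hu.1)
    have hlogu : Real.log (u / a) = Real.log u - A := by
      rw [Real.log_div (ne_of_gt hu0) (ne_of_gt ha), hA]
    have hlogL : Real.log (u / a) ≤ L := by
      have h2 : Real.log u ≤ B := by rw [hB]; exact Real.log_le_log hu0 hu.2
      rw [hlogu, hLdef]; linarith
    have ht0 : 0 ≤ t := div_nonneg hlog0 hL.le
    have ht1 : t ≤ 1 := by rw [ht]; exact (div_le_one hL).mpr hlogL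
    have htL : t * L = Real.log (u / a) := by rw [ht]; field_simp
    have hrep : b ^ t * a ^ (1 - t) = u := by
      rw [Real.rpow_def_of_pos hb, Real.rpow_def_of_pos ha, ← Real.exp_add, ← hA, ← hB]
      have h3 : B * t + A * (1 - t) = Real.log u := by
        have : B * t + A * (1 - t) = A + t * L := by rw [hLdef]; ring
        rw [this, htL, hlogu]; ring
      rw [h3, Real.exp_log hu0]
    have hcu := hconv b hbmem a hamem t ⟨ht0, ht1⟩
    dsimp only at hcu
    rw [hrep] at hcu
    have h1 : |f' b| ^ q ≤ K ^ q := Real.rpow_le_rpow (abs_nonneg _) (le_max_right _ _) hq0.le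
    have h2 : |f' a| ^ q ≤ K ^ q := Real.rpow_le_rpow (abs_nonneg _) (le_max_left _ _) hq0.le
    have hKq : |f' u| ^ q ≤ K ^ q := by
      calc |f' u| ^ q ≤ t * |f' b| ^ q + (1 - t) * |f' a| ^ q := hcu
        _ ≤ t * K ^ q + (1 - t) * K ^ q :=
            add_le_add (mul_le_mul_of_nonneg_left h1 ht0)
              (mul_le_mul_of_nonneg_left h2 (by linarith))
        _ = K ^ q := by ring
    by_contra hlt
    push_neg at hlt
    exact absurd hKq (not_le.mpr (Real.rpow_lt_rpow hK0 hlt hq0))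
  -- side 1 data
  set ρ : ℝ := b / a with hρdef
  have hρ0 : 0 < ρ := by positivity
  have hρ1 : 1 ≤ ρ := (one_le_div ha).mpr hab.le
  have hlogρ : Real.log ρ = L := by
    rw [hρdef, Real.log_div (ne_of_gt hb) (ne_of_gt ha), ← hA, ← hB, hLdef]
  set X : ℝ → ℝ := fun s => Real.exp (L / 2 * s + A) with hXdef
  have hXmem : ∀ s ∈ Set.Icc (0:ℝ) 1, Real.exp (L / 2 * s + A) ∈ Set.Icc a b := by
    intro s hs
    apply hmemIcc
    constructor
    · have h0 : (0:ℝ) ≤ L / 2 * s := mul_nonneg (by linarith) hs.1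
      linarith
    · have h1 : L / 2 * s ≤ L / 2 := mul_le_of_le_one_right (by linarith) hs.2
      linarith
  have hXeq : ∀ s : ℝ, X s = a * ρ ^ (s / 2) := by
    intro s
    rw [hXdef]
    dsimp only
    rw [Real.rpow_def_of_pos hρ0, ← hexpA, ← Real.exp_add, hlogρ]
    congr 1; ring
  have hXM : ∀ s : ℝ, M ^ s * a ^ (1 - s) = X s := by
    intro s
    rw [hXdef]
    dsimp only
    rw [Real.rpow_def_of_pos hMpos, Real.rpow_def_of_pos ha, ← Real.exp_add, hlogM, ← hA]
    congr 1; rw [hc]; ring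
  set φ₁ : ℝ → ℝ := fun s => ρ ^ (s / 2) * |f' (X s)| with hφ₁def
  have hf'Xmeas : AEStronglyMeasurable (fun s => f' (X s))
      (volume.restrict (Set.Ioc (0:ℝ) 1)) :=
    aux_comp_meas f' (c := A) (d := L / 2) (ne_of_gt (by linarith)) hXmem hf'ab
  have hcρhalf : Continuous fun s : ℝ => ρ ^ (s / 2) := by
    have : (fun s : ℝ => ρ ^ (s / 2)) = fun s => Real.exp (Real.log ρ * (s / 2)) :=
      funext fun s => Real.rpow_def_of_pos hρ0 _
    rw [this]
    exact Real.continuous_exp.comp (continuous_const.mul (continuous_id'.div_const 2))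
  have hφ₁meas : AEStronglyMeasurable φ₁ (volume.restrict (Set.Ioc (0:ℝ) 1)) :=
    (hcρhalf.aestronglyMeasurable).mul (continuous_abs.comp_aestronglyMeasurable hf'Xmeas)
  have hφ₁0 : ∀ s, 0 ≤ φ₁ s := fun s =>
    mul_nonneg (Real.rpow_nonneg hρ0.le _) (abs_nonneg _)
  set K₁ : ℝ := ρ ^ ((1:ℝ) / 2) * K with hK₁def
  have hK₁0 : 0 ≤ K₁ := mul_nonneg (Real.rpow_nonneg hρ0.le _) hK0
  have hφ₁bd : ∀ s ∈ Set.Icc (0:ℝ) 1, φ₁ s ≤ K₁ := by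
    intro s hs
    refine mul_le_mul ?_ (hKbd _ (hXmem s hs)) (abs_nonneg _) (Real.rpow_nonneg hρ0.le _)
    exact Real.rpow_le_rpow_of_exponent_le hρ1 (by linarith [hs.2])
  have hcontq : Continuous fun x : ℝ => x ^ q :=
    continuous_iff_continuousAt.mpr fun x => Real.continuousAt_rpow_const x q (Or.inr hq0.le)
  have hcρq : Continuous fun s : ℝ => ρ ^ (q * s / 2) := by
    have : (fun s : ℝ => ρ ^ (q * s / 2)) = fun s => Real.exp (Real.log ρ * (q * s / 2)) :=
      funext fun s => Real.rpow_def_of_pos hρ0 _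
    rw [this]
    exact Real.continuous_exp.comp
      (continuous_const.mul ((continuous_const.mul continuous_id').div_const 2))
  have hsφ₁qint : IntervalIntegrable (fun s => s * φ₁ s ^ q) volume 0 1 := by
    apply aux_integrable01 (K := K₁ ^ q)
    · exact (continuous_id.aestronglyMeasurable).mul
        (hcontq.comp_aestronglyMeasurable hφ₁meas)
    · intro s hs
      have h1 : φ₁ s ^ q ≤ K₁ ^ q := Real.rpow_le_rpow (hφ₁0 s) (hφ₁bd s ⟨hs.1.le, hs.2⟩) hq0.le
      have h2 : (0:ℝ) ≤ φ₁ s ^ q := Real.rpow_nonneg (hφ₁0 s) q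
      rw [abs_of_nonneg (mul_nonneg hs.1.le h2)]
      calc s * φ₁ s ^ q ≤ 1 * K₁ ^ q := mul_le_mul hs.2 h1 h2 zero_le_one
        _ = K₁ ^ q := one_mul _
  have hG₁cont : Continuous fun s : ℝ =>
      |f' M| ^ q * (s ^ (2:ℕ) * ρ ^ (q * s / 2)) + |f' a| ^ q * (s * (1 - s) * ρ ^ (q * s / 2)) :=
    (continuous_const.mul ((continuous_pow 2).mul hcρq)).add
      (continuous_const.mul (((continuous_id').mul (continuous_const.sub continuous_id')).mul hcρq))
  have hE₁ : (∫ s in (0:ℝ)..1, s * φ₁ s ^ q) ≤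
      ∫ s in (0:ℝ)..1, (|f' M| ^ q * (s ^ (2:ℕ) * ρ ^ (q * s / 2))
        + |f' a| ^ q * (s * (1 - s) * ρ ^ (q * s / 2))) := by
    refine intervalIntegral.integral_mono_on zero_le_one hsφ₁qint
      (hG₁cont.intervalIntegrable _ _) ?_
    intro s hs
    have hGA : |f' (X s)| ^ q ≤ s * |f' M| ^ q + (1 - s) * |f' a| ^ q := by
      have hcu := hconv M hMmem a hamem s hs
      dsimp only at hcu
      rwa [hXM s] at hcu
    have hsplit2 : φ₁ s ^ q = ρ ^ (q * s / 2) * |f' (X s)| ^ q := by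
      rw [hφ₁def]
      dsimp only
      rw [Real.mul_rpow (Real.rpow_nonneg hρ0.le _) (abs_nonneg _), ← Real.rpow_mul hρ0.le]
      have : s / 2 * q = q * s / 2 := by ring
      rw [this]
    rw [hsplit2]
    have h0 : (0:ℝ) ≤ ρ ^ (q * s / 2) := Real.rpow_nonneg hρ0.le _
    calc s * (ρ ^ (q * s / 2) * |f' (X s)| ^ q)
        = ρ ^ (q * s / 2) * (s * |f' (X s)| ^ q) := by ring
      _ ≤ ρ ^ (q * s / 2) * (s * (s * |f' M| ^ q + (1 - s) * |f' a| ^ q)) :=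
          mul_le_mul_of_nonneg_left (mul_le_mul_of_nonneg_left hGA hs.1) h0
      _ = |f' M| ^ q * (s ^ (2:ℕ) * ρ ^ (q * s / 2))
          + |f' a| ^ q * (s * (1 - s) * ρ ^ (q * s / 2)) := by ring
  have hB₁split : (∫ s in (0:ℝ)..1, (|f' M| ^ q * (s ^ (2:ℕ) * ρ ^ (q * s / 2))
        + |f' a| ^ q * (s * (1 - s) * ρ ^ (q * s / 2))))
      = |f' M| ^ q * (∫ t in (0:ℝ)..1, t ^ (2:ℕ) * ρ ^ (q * t / 2))
        + |f' a| ^ q * (∫ t in (0:ℝ)..1, t * (1 - t) * ρ ^ (q * t / 2)) := by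
    rw [intervalIntegral.integral_add
        (f := fun s => |f' M| ^ q * (s ^ (2:ℕ) * ρ ^ (q * s / 2)))
        (g := fun s => |f' a| ^ q * (s * (1 - s) * ρ ^ (q * s / 2)))
        ((continuous_const.mul ((continuous_pow 2).mul hcρq)).intervalIntegrable _ _)
        ((continuous_const.mul (((continuous_id').mul
          (continuous_const.sub continuous_id')).mul hcρq)).intervalIntegrable _ _),
      intervalIntegral.integral_const_mul, intervalIntegral.integral_const_mul]
  set B1 : ℝ := |f' M| ^ q * (∫ t in (0:ℝ)..1, t ^ (2:ℕ) * ρ ^ (q * t / 2))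
    + |f' a| ^ q * (∫ t in (0:ℝ)..1, t * (1 - t) * ρ ^ (q * t / 2)) with hB1def
  have hE₁' : (∫ s in (0:ℝ)..1, s * φ₁ s ^ q) ≤ B1 := le_of_le_of_eq hE₁ hB₁split
  have hE₁0 : (0:ℝ) ≤ ∫ s in (0:ℝ)..1, s * φ₁ s ^ q :=
    intervalIntegral.integral_nonneg zero_le_one fun s hs =>
      mul_nonneg hs.1 (Real.rpow_nonneg (hφ₁0 s) q)
  have hB10 : (0:ℝ) ≤ B1 := le_trans hE₁0 hE₁'
  have hJ₁ : (∫ s in (0:ℝ)..1, s * φ₁ s) ≤ (1/2 : ℝ) ^ (1 - 1/q) * B1 ^ (1/q) := by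
    refine le_trans (aux_hoelder01 hq hφ₁0 hφ₁meas hφ₁bd) ?_
    refine mul_le_mul_of_nonneg_left ?_ (Real.rpow_nonneg (by norm_num) _)
    exact Real.rpow_le_rpow hE₁0 hE₁' (by positivity)
  have hT1bd : |T1| ≤ L / 2 * (L / 2 * (a * ∫ s in (0:ℝ)..1, s * φ₁ s)) := by
    have habs : |T1| ≤ ∫ w in A..c, (w - A) * |h' w| := by
      refine le_trans (intervalIntegral.abs_integral_le_integral_abs hAc) (le_of_eq ?_)
      refine intervalIntegral.integral_congr fun w hw => ?_
      rw [Set.uIcc_of_le hAc] at hw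
      rw [abs_mul, abs_of_nonneg (sub_nonneg.mpr hw.1)]
    have hcomp := intervalIntegral.integral_comp_mul_add (a := (0:ℝ)) (b := 1)
      (f := fun w => (w - A) * |h' w|) (c := L / 2) (ne_of_gt (by linarith)) A
    have hb1 : L / 2 * 0 + A = A := by ring
    have hb2 : L / 2 * 1 + A = c := by rw [hc]; ring
    rw [hb1, hb2, smul_eq_mul] at hcomp
    have hptw : (∫ s in (0:ℝ)..1, (fun w => (w - A) * |h' w|) (L / 2 * s + A))
        = ∫ s in (0:ℝ)..1, L / 2 * (a * (s * φ₁ s)) := by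
      refine intervalIntegral.integral_congr fun s _ => ?_
      show (L / 2 * s + A - A) * |h' (L / 2 * s + A)| = L / 2 * (a * (s * φ₁ s))
      have e1 : h' (L / 2 * s + A) = X s * f' (X s) := rfl
      have e2 : (0:ℝ) < X s := Real.exp_pos _
      rw [hφ₁def]
      dsimp only
      rw [e1, abs_mul, abs_of_pos e2, hXeq s]
      ring
    rw [hptw] at hcomp
    have hLhalf : (0:ℝ) < L / 2 := by linarith
    calc |T1| ≤ ∫ w in A..c, (w - A) * |h' w| := habs
      _ = L / 2 * ∫ s in (0:ℝ)..1, L / 2 * (a * (s * φ₁ s)) := by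
          rw [hcomp]; field_simp
      _ = L / 2 * (L / 2 * (a * ∫ s in (0:ℝ)..1, s * φ₁ s)) := by
          rw [intervalIntegral.integral_const_mul, intervalIntegral.integral_const_mul]
  -- side 2 data
  set σ : ℝ := a / b with hσdef
  have hσ0 : 0 < σ := by positivity
  have hσ1 : σ ≤ 1 := by rw [hσdef]; exact (div_le_one hb).mpr hab.le
  have hlogσ : Real.log σ = -L := by
    rw [hσdef, Real.log_div (ne_of_gt ha) (ne_of_gt hb), ← hA, ← hB, hLdef]; ring
  set Y : ℝ → ℝ := fun s => Real.exp (-(L / 2) * s + B) with hYdef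
  have hYmem : ∀ s ∈ Set.Icc (0:ℝ) 1, Real.exp (-(L / 2) * s + B) ∈ Set.Icc a b := by
    intro s hs
    apply hmemIcc
    have he : -(L / 2) * s + B = B - L / 2 * s := by ring
    constructor
    · have h1 : L / 2 * s ≤ L / 2 := mul_le_of_le_one_right (by linarith) hs.2
      rw [he]; linarith
    · have h0 : (0:ℝ) ≤ L / 2 * s := mul_nonneg (by linarith) hs.1
      rw [he]; linarith
  have hYeq : ∀ s : ℝ, Y s = b * σ ^ (s / 2) := by
    intro s
    rw [hYdef]
    dsimp only
    rw [Real.rpow_def_of_pos hσ0, ← hexpB, ← Real.exp_add, hlogσ]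
    congr 1; ring
  have hYM : ∀ s : ℝ, M ^ s * b ^ (1 - s) = Y s := by
    intro s
    rw [hYdef]
    dsimp only
    rw [Real.rpow_def_of_pos hMpos, Real.rpow_def_of_pos hb, ← Real.exp_add, hlogM, ← hB]
    congr 1; rw [hc, hLdef]; ring
  set φ₂ : ℝ → ℝ := fun s => σ ^ (s / 2) * |f' (Y s)| with hφ₂def
  have hf'Ymeas : AEStronglyMeasurable (fun s => f' (Y s))
      (volume.restrict (Set.Ioc (0:ℝ) 1)) :=
    aux_comp_meas f' (c := B) (d := -(L / 2)) (ne_of_lt (by linarith)) hYmem hf'ab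
  have hcσhalf : Continuous fun s : ℝ => σ ^ (s / 2) := by
    have : (fun s : ℝ => σ ^ (s / 2)) = fun s => Real.exp (Real.log σ * (s / 2)) :=
      funext fun s => Real.rpow_def_of_pos hσ0 _
    rw [this]
    exact Real.continuous_exp.comp (continuous_const.mul (continuous_id'.div_const 2))
  have hφ₂meas : AEStronglyMeasurable φ₂ (volume.restrict (Set.Ioc (0:ℝ) 1)) :=
    (hcσhalf.aestronglyMeasurable).mul (continuous_abs.comp_aestronglyMeasurable hf'Ymeas)
  have hφ₂0 : ∀ s, 0 ≤ φ₂ s := fun s =>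
    mul_nonneg (Real.rpow_nonneg hσ0.le _) (abs_nonneg _)
  have hφ₂bd : ∀ s ∈ Set.Icc (0:ℝ) 1, φ₂ s ≤ K := by
    intro s hs
    calc φ₂ s ≤ 1 * K := by
          refine mul_le_mul ?_ (hKbd _ (hYmem s hs)) (abs_nonneg _) zero_le_one
          exact Real.rpow_le_one hσ0.le hσ1 (by linarith [hs.1])
      _ = K := one_mul _
  have hcσq : Continuous fun s : ℝ => σ ^ (q * s / 2) := by
    have : (fun s : ℝ => σ ^ (q * s / 2)) = fun s => Real.exp (Real.log σ * (q * s / 2)) :=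
      funext fun s => Real.rpow_def_of_pos hσ0 _
    rw [this]
    exact Real.continuous_exp.comp
      (continuous_const.mul ((continuous_const.mul continuous_id').div_const 2))
  have hsφ₂qint : IntervalIntegrable (fun s => s * φ₂ s ^ q) volume 0 1 := by
    apply aux_integrable01 (K := K ^ q)
    · exact (continuous_id.aestronglyMeasurable).mul
        (hcontq.comp_aestronglyMeasurable hφ₂meas)
    · intro s hs
      have h1 : φ₂ s ^ q ≤ K ^ q := Real.rpow_le_rpow (hφ₂0 s) (hφ₂bd s ⟨hs.1.le, hs.2⟩) hq0.le
      have h2 : (0:ℝ) ≤ φ₂ s ^ q := Real.rpow_nonneg (hφ₂0 s) q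
      rw [abs_of_nonneg (mul_nonneg hs.1.le h2)]
      calc s * φ₂ s ^ q ≤ 1 * K ^ q := mul_le_mul hs.2 h1 h2 zero_le_one
        _ = K ^ q := one_mul _
  have hG₂cont : Continuous fun s : ℝ =>
      |f' M| ^ q * (s ^ (2:ℕ) * σ ^ (q * s / 2)) + |f' b| ^ q * (s * (1 - s) * σ ^ (q * s / 2)) :=
    (continuous_const.mul ((continuous_pow 2).mul hcσq)).add
      (continuous_const.mul (((continuous_id').mul (continuous_const.sub continuous_id')).mul hcσq))
  have hE₂ : (∫ s in (0:ℝ)..1, s * φ₂ s ^ q) ≤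
      ∫ s in (0:ℝ)..1, (|f' M| ^ q * (s ^ (2:ℕ) * σ ^ (q * s / 2))
        + |f' b| ^ q * (s * (1 - s) * σ ^ (q * s / 2))) := by
    refine intervalIntegral.integral_mono_on zero_le_one hsφ₂qint
      (hG₂cont.intervalIntegrable _ _) ?_
    intro s hs
    have hGA : |f' (Y s)| ^ q ≤ s * |f' M| ^ q + (1 - s) * |f' b| ^ q := by
      have hcu := hconv M hMmem b hbmem s hs
      dsimp only at hcu
      rwa [hYM s] at hcu
    have hsplit2 : φ₂ s ^ q = σ ^ (q * s / 2) * |f' (Y s)| ^ q := by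
      rw [hφ₂def]
      dsimp only
      rw [Real.mul_rpow (Real.rpow_nonneg hσ0.le _) (abs_nonneg _), ← Real.rpow_mul hσ0.le]
      have : s / 2 * q = q * s / 2 := by ring
      rw [this]
    rw [hsplit2]
    have h0 : (0:ℝ) ≤ σ ^ (q * s / 2) := Real.rpow_nonneg hσ0.le _
    calc s * (σ ^ (q * s / 2) * |f' (Y s)| ^ q)
        = σ ^ (q * s / 2) * (s * |f' (Y s)| ^ q) := by ring
      _ ≤ σ ^ (q * s / 2) * (s * (s * |f' M| ^ q + (1 - s) * |f' b| ^ q)) :=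
          mul_le_mul_of_nonneg_left (mul_le_mul_of_nonneg_left hGA hs.1) h0
      _ = |f' M| ^ q * (s ^ (2:ℕ) * σ ^ (q * s / 2))
          + |f' b| ^ q * (s * (1 - s) * σ ^ (q * s / 2)) := by ring
  have hB₂split : (∫ s in (0:ℝ)..1, (|f' M| ^ q * (s ^ (2:ℕ) * σ ^ (q * s / 2))
        + |f' b| ^ q * (s * (1 - s) * σ ^ (q * s / 2))))
      = |f' M| ^ q * (∫ t in (0:ℝ)..1, t ^ (2:ℕ) * σ ^ (q * t / 2))
        + |f' b| ^ q * (∫ t in (0:ℝ)..1, t * (1 - t) * σ ^ (q * t / 2)) := by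
    rw [intervalIntegral.integral_add
        (f := fun s => |f' M| ^ q * (s ^ (2:ℕ) * σ ^ (q * s / 2)))
        (g := fun s => |f' b| ^ q * (s * (1 - s) * σ ^ (q * s / 2)))
        ((continuous_const.mul ((continuous_pow 2).mul hcσq)).intervalIntegrable _ _)
        ((continuous_const.mul (((continuous_id').mul
          (continuous_const.sub continuous_id')).mul hcσq)).intervalIntegrable _ _),
      intervalIntegral.integral_const_mul, intervalIntegral.integral_const_mul]
  set B2 : ℝ := |f' M| ^ q * (∫ t in (0:ℝ)..1, t ^ (2:ℕ) * σ ^ (q * t / 2))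
    + |f' b| ^ q * (∫ t in (0:ℝ)..1, t * (1 - t) * σ ^ (q * t / 2)) with hB2def
  have hE₂' : (∫ s in (0:ℝ)..1, s * φ₂ s ^ q) ≤ B2 := le_of_le_of_eq hE₂ hB₂split
  have hE₂0 : (0:ℝ) ≤ ∫ s in (0:ℝ)..1, s * φ₂ s ^ q :=
    intervalIntegral.integral_nonneg zero_le_one fun s hs =>
      mul_nonneg hs.1 (Real.rpow_nonneg (hφ₂0 s) q)
  have hB20 : (0:ℝ) ≤ B2 := le_trans hE₂0 hE₂'
  have hJ₂ : (∫ s in (0:ℝ)..1, s * φ₂ s) ≤ (1/2 : ℝ) ^ (1 - 1/q) * B2 ^ (1/q) := by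
    refine le_trans (aux_hoelder01 hq hφ₂0 hφ₂meas hφ₂bd) ?_
    refine mul_le_mul_of_nonneg_left ?_ (Real.rpow_nonneg (by norm_num) _)
    exact Real.rpow_le_rpow hE₂0 hE₂' (by positivity)
  have hT2bd : |T2| ≤ L / 2 * (L / 2 * (b * ∫ s in (0:ℝ)..1, s * φ₂ s)) := by
    have habs : |T2| ≤ ∫ w in c..B, (B - w) * |h' w| := by
      refine le_trans (intervalIntegral.abs_integral_le_integral_abs hcB) (le_of_eq ?_)
      refine intervalIntegral.integral_congr fun w hw => ?_
      rw [Set.uIcc_of_le hcB] at hw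
      rw [abs_mul, abs_of_nonneg (sub_nonneg.mpr hw.2)]
    have hcomp := intervalIntegral.integral_comp_mul_add (a := (0:ℝ)) (b := 1)
      (f := fun w => (B - w) * |h' w|) (c := -(L / 2)) (ne_of_lt (by linarith)) B
    have hb1 : -(L / 2) * 0 + B = B := by ring
    have hb2 : -(L / 2) * 1 + B = c := by rw [hc, hLdef]; ring
    rw [hb1, hb2, smul_eq_mul, intervalIntegral.integral_symm c B] at hcomp
    have hptw : (∫ s in (0:ℝ)..1, (fun w => (B - w) * |h' w|) (-(L / 2) * s + B))
        = ∫ s in (0:ℝ)..1, L / 2 * (b * (s * φ₂ s)) := by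
      refine intervalIntegral.integral_congr fun s _ => ?_
      show (B - (-(L / 2) * s + B)) * |h' (-(L / 2) * s + B)| = L / 2 * (b * (s * φ₂ s))
      have e1 : h' (-(L / 2) * s + B) = Y s * f' (Y s) := rfl
      have e2 : (0:ℝ) < Y s := Real.exp_pos _
      rw [hφ₂def]
      dsimp only
      rw [e1, abs_mul, abs_of_pos e2, hYeq s]
      ring
    rw [hptw] at hcomp
    calc |T2| ≤ ∫ w in c..B, (B - w) * |h' w| := habs
      _ = L / 2 * ∫ s in (0:ℝ)..1, L / 2 * (b * (s * φ₂ s)) := by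
          rw [hcomp]; field_simp
      _ = L / 2 * (L / 2 * (b * ∫ s in (0:ℝ)..1, s * φ₂ s)) := by
          rw [intervalIntegral.integral_const_mul, intervalIntegral.integral_const_mul]
  -- final assembly
  have habs0 : |f M - 1 / L * ∫ u in a..b, f u / u| ≤ 1 / L * (|T1| + |T2|) := by
    rw [hidentity, abs_mul, abs_of_pos (show (0:ℝ) < 1/L by positivity)]
    exact mul_le_mul_of_nonneg_left (abs_sub _ _) (by positivity)
  have hchain : 1 / L * (|T1| + |T2|) ≤
      1 / L * ((L / 2 * (L / 2 * (a * ((1/2 : ℝ) ^ (1 - 1/q) * B1 ^ (1/q)))))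
        + (L / 2 * (L / 2 * (b * ((1/2 : ℝ) ^ (1 - 1/q) * B2 ^ (1/q)))))) := by
    refine mul_le_mul_of_nonneg_left (add_le_add ?_ ?_) (by positivity)
    · refine le_trans hT1bd ?_
      exact mul_le_mul_of_nonneg_left (mul_le_mul_of_nonneg_left
        (mul_le_mul_of_nonneg_left hJ₁ ha.le) (by linarith)) (by linarith)
    · refine le_trans hT2bd ?_
      exact mul_le_mul_of_nonneg_left (mul_le_mul_of_nonneg_left
        (mul_le_mul_of_nonneg_left hJ₂ hb.le) (by linarith)) (by linarith)
  have h3q : ((1:ℝ)/2) ^ ((3:ℝ) - 1/q) = 1/4 * ((1:ℝ)/2) ^ (1 - 1/q) := by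
    have h2 : ((1:ℝ)/2) ^ ((2:ℝ)) = 1/4 := by
      rw [show ((2:ℝ)) = ((2:ℕ):ℝ) by norm_num, Real.rpow_natCast]; norm_num
    rw [show (3:ℝ) - 1/q = 2 + (1 - 1/q) by ring, Real.rpow_add (by norm_num : (0:ℝ) < 1/2), h2]
  have hfinal_eq : 1 / L * ((L / 2 * (L / 2 * (a * ((1/2 : ℝ) ^ (1 - 1/q) * B1 ^ (1/q)))))
        + (L / 2 * (L / 2 * (b * ((1/2 : ℝ) ^ (1 - 1/q) * B2 ^ (1/q))))))
      = Real.log ρ * (1/2 : ℝ) ^ ((3:ℝ) - 1/q) * (a * B1 ^ (1/q) + b * B2 ^ (1/q)) := by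
    have hgen : ∀ (LL CC xa xb ua ub : ℝ), LL ≠ 0 →
        1 / LL * ((LL / 2 * (LL / 2 * (xa * (CC * ua)))) + (LL / 2 * (LL / 2 * (xb * (CC * ub)))))
          = LL * (1/4 * CC) * (xa * ua + xb * ub) := by
      intro LL CC xa xb ua ub hne
      field_simp
      ring
    rw [hlogρ, h3q]
    exact hgen L _ a b _ _ (ne_of_gt hL)
  calc |f M - 1 / L * ∫ u in a..b, f u / u| ≤ 1 / L * (|T1| + |T2|) := habs0
    _ ≤ _ := hchain
    _ = Real.log ρ * (1/2 : ℝ) ^ ((3:ℝ) - 1/q) * (a * B1 ^ (1/q) + b * B2 ^ (1/q)) := hfinal_eq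
end

section
/- For θ > 0, p > 1 and λ ∈ (0,1), ∫₀¹ |t^θ − λ|^p dt = (λ^{(θp+1)/θ}/θ)·B(1/θ, p+1) + ((1−λ)^{p+1}/(θ(p+1)))·₂F₁(1 − 1/θ, 1; p+2; 1−λ), where B is the Beta function and ₂F₁ is the Gauss hypergeometric function. -/
open MeasureTheory intervalIntegral Set

/-- Gauss hypergeometric function via Euler's integral representation
(valid for `c > b > 0`, `|z| < 1`). -/
noncomputable def gauss2F1 (a b c z : ℝ) : ℝ :=
  (1 / betaR b (c - b)) *
    ∫ t in (0:ℝ)..1, t ^ (b - 1) * (1 - t) ^ (c - b - 1) * (1 - z * t) ^ (-a)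


section Helpers

private lemma pow_inv_pow' {θ : ℝ} (hθ : 0 < θ) {x : ℝ} (hx : 0 ≤ x) : (x ^ (1/θ)) ^ θ = x := by
  rw [← Real.rpow_mul hx, one_div, inv_mul_cancel₀ hθ.ne', Real.rpow_one]

private lemma pow_pow_inv' {θ : ℝ} (hθ : 0 < θ) {x : ℝ} (hx : 0 ≤ x) : (x ^ θ) ^ (1/θ) = x := by
  rw [← Real.rpow_mul hx, one_div, mul_inv_cancel₀ hθ.ne', Real.rpow_one]

private lemma betaR_eq_integral {x y : ℝ} (hx : 0 < x) (hy : 0 < y) :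
    betaR x y = ∫ t in (0:ℝ)..1, t ^ (x - 1) * (1 - t) ^ (y - 1) := by
  have key : Complex.Gamma x * Complex.Gamma y
      = Complex.Gamma (x + y) * Complex.betaIntegral x y := by
    have := Complex.Gamma_mul_Gamma_eq_betaIntegral (s := (x:ℂ)) (t := (y:ℂ))
      (by simpa using hx) (by simpa using hy)
    simpa using this
  have hint : Complex.betaIntegral x y
      = ((∫ t in (0:ℝ)..1, t ^ (x - 1) * (1 - t) ^ (y - 1) : ℝ) : ℂ) := by
    rw [Complex.betaIntegral, ← intervalIntegral.integral_ofReal]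
    refine intervalIntegral.integral_congr fun t ht => ?_
    rw [Set.uIcc_of_le zero_le_one] at ht
    rw [Complex.ofReal_mul, Complex.ofReal_cpow ht.1, Complex.ofReal_cpow (by linarith [ht.2])]
    push_cast
    ring
  have hne : Real.Gamma (x + y) ≠ 0 := (Real.Gamma_pos_of_pos (by linarith)).ne'
  have key2 : Real.Gamma x * Real.Gamma y
      = Real.Gamma (x + y) * ∫ t in (0:ℝ)..1, t ^ (x - 1) * (1 - t) ^ (y - 1) := by
    have := key
    rw [hint, Complex.Gamma_ofReal, Complex.Gamma_ofReal] at this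
    rw [show ((x:ℂ) + y) = ((x + y : ℝ) : ℂ) by push_cast; ring, Complex.Gamma_ofReal] at this
    exact_mod_cast this
  rw [betaR, key2]
  field_simp

private lemma piece1 {θ p l : ℝ} (hθ : 0 < θ) (hl0 : 0 < l) :
    (∫ t in Ioo (0:ℝ) (l ^ (1/θ)), (l - t ^ θ) ^ p)
      = (l ^ (1/θ + p) / θ) * ∫ s in Ioo (0:ℝ) 1, s ^ (1/θ - 1) * (1 - s) ^ p := by
  set φ : ℝ → ℝ := fun s => (l * s) ^ (1/θ) with hφ
  set ψ : ℝ → ℝ := fun s => 1/θ * (l * s) ^ (1/θ - 1) * l with hψ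
  have himg : φ '' Ioo 0 1 = Ioo (0:ℝ) (l ^ (1/θ)) := by
    ext t
    constructor
    · rintro ⟨s, hs, rfl⟩
      exact ⟨Real.rpow_pos_of_pos (by nlinarith [hs.1]) _,
        Real.rpow_lt_rpow (by nlinarith [hs.1]) (by nlinarith [hs.2]) (by positivity)⟩
    · rintro ⟨ht0, ht1⟩
      refine ⟨t ^ θ / l, ⟨by positivity, ?_⟩, ?_⟩
      · rw [div_lt_one hl0]
        calc t ^ θ < (l ^ (1/θ)) ^ θ := Real.rpow_lt_rpow ht0.le ht1 hθ
        _ = l := pow_inv_pow' hθ hl0.le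
      · show (l * (t ^ θ / l)) ^ (1/θ) = t
        rw [mul_comm, div_mul_cancel₀ _ hl0.ne', pow_pow_inv' hθ ht0.le]
  have hderiv : ∀ s ∈ Ioo (0:ℝ) 1, HasDerivWithinAt φ (ψ s) (Ioo 0 1) s := by
    intro s hs
    have hmul : HasDerivAt (fun s : ℝ => l * s) l s := by
      simpa using (hasDerivAt_id s).const_mul l
    have houter : HasDerivAt (fun x : ℝ => x ^ (1/θ)) (1/θ * (l * s) ^ (1/θ - 1)) (l * s) :=
      Real.hasDerivAt_rpow_const (Or.inl (by nlinarith [hs.1]))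
    exact (houter.comp s hmul).hasDerivWithinAt
  have hinj : InjOn φ (Ioo 0 1) := by
    intro a ha b hb hab
    have : (φ a) ^ θ = (φ b) ^ θ := by rw [hab]
    rw [hφ] at this
    simp only [pow_inv_pow' hθ (by nlinarith [ha.1] : (0:ℝ) ≤ l * a),
      pow_inv_pow' hθ (by nlinarith [hb.1] : (0:ℝ) ≤ l * b)] at this
    exact mul_left_cancel₀ hl0.ne' this
  rw [← himg, MeasureTheory.integral_image_eq_integral_abs_deriv_smul measurableSet_Ioo hderiv hinj,
    ← MeasureTheory.integral_const_mul]
  refine MeasureTheory.setIntegral_congr_fun measurableSet_Ioo fun s hs => ?_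
  have hs0 : 0 < s := hs.1
  have hs1 : s < 1 := hs.2
  have hls : 0 < l * s := by positivity
  have h1 : (φ s) ^ θ = l * s := pow_inv_pow' hθ hls.le
  have habs : |ψ s| = ψ s := abs_of_pos (by rw [hψ]; positivity)
  rw [smul_eq_mul, habs, hψ, h1]
  rw [show l - l * s = l * (1 - s) by ring]
  show 1/θ * (l * s) ^ (1/θ - 1) * l * (l * (1 - s)) ^ p
      = l ^ (1/θ + p) / θ * (s ^ (1/θ - 1) * (1 - s) ^ p)
  rw [Real.mul_rpow hl0.le (by linarith : (0:ℝ) ≤ 1 - s), Real.mul_rpow hl0.le hs0.le]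
  have h3 : l ^ (1/θ - 1) * l = l ^ (1/θ) := by
    rw [← Real.rpow_add_one hl0.ne', sub_add_cancel]
  have h4 : l ^ (1/θ) * l ^ p = l ^ (1/θ + p) := (Real.rpow_add hl0 _ _).symm
  calc 1/θ * (l ^ (1/θ - 1) * s ^ (1/θ - 1)) * l * (l ^ p * (1 - s) ^ p)
      = (l ^ (1/θ - 1) * l * l ^ p) / θ * (s ^ (1/θ - 1) * (1 - s) ^ p) := by ring
    _ = l ^ (1/θ + p) / θ * (s ^ (1/θ - 1) * (1 - s) ^ p) := by rw [h3, h4]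

private lemma piece2 {θ p l : ℝ} (hθ : 0 < θ) (hl0 : 0 < l) (hl1 : l < 1) :
    (∫ t in Ioo (l ^ (1/θ)) 1, (t ^ θ - l) ^ p)
      = ((1 - l) ^ (p + 1) / θ) * ∫ u in Ioo (0:ℝ) 1, u ^ p * (l + (1 - l) * u) ^ (1/θ - 1) := by
  have h1l : 0 < 1 - l := by linarith
  set φ : ℝ → ℝ := fun u => (l + (1 - l) * u) ^ (1/θ) with hφ
  set ψ : ℝ → ℝ := fun u => 1/θ * (l + (1 - l) * u) ^ (1/θ - 1) * (1 - l) with hψ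
  have hpos : ∀ u : ℝ, 0 < u → 0 < l + (1 - l) * u := fun u hu => by positivity
  have himg : φ '' Ioo 0 1 = Ioo (l ^ (1/θ)) 1 := by
    ext t
    constructor
    · rintro ⟨u, hu, rfl⟩
      have h1 : l < l + (1 - l) * u := by nlinarith [hu.1]
      have h2 : l + (1 - l) * u < 1 := by nlinarith [hu.2]
      refine ⟨Real.rpow_lt_rpow hl0.le h1 (by positivity), ?_⟩
      calc (l + (1 - l) * u) ^ (1/θ) < 1 ^ (1/θ) :=
            Real.rpow_lt_rpow (by linarith) h2 (by positivity)
        _ = 1 := Real.one_rpow _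
    · rintro ⟨ht0, ht1⟩
      have htpos : 0 < t := lt_trans (Real.rpow_pos_of_pos hl0 _) ht0
      have hlt : l < t ^ θ := by
        calc l = (l ^ (1/θ)) ^ θ := (pow_inv_pow' hθ hl0.le).symm
          _ < t ^ θ := Real.rpow_lt_rpow (Real.rpow_pos_of_pos hl0 _).le ht0 hθ
      have hlt1 : t ^ θ < 1 := Real.rpow_lt_one htpos.le ht1 hθ
      refine ⟨(t ^ θ - l) / (1 - l),
        ⟨div_pos (by linarith) h1l, by rw [div_lt_one h1l]; linarith⟩, ?_⟩
      show (l + (1 - l) * ((t ^ θ - l) / (1 - l))) ^ (1/θ) = t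
      rw [mul_comm, div_mul_cancel₀ _ h1l.ne']
      rw [show l + (t ^ θ - l) = t ^ θ by ring, pow_pow_inv' hθ htpos.le]
  have hderiv : ∀ u ∈ Ioo (0:ℝ) 1, HasDerivWithinAt φ (ψ u) (Ioo 0 1) u := by
    intro u hu
    have hmul : HasDerivAt (fun u : ℝ => l + (1 - l) * u) (1 - l) u := by
      simpa using ((hasDerivAt_id u).const_mul (1 - l)).const_add l
    have houter : HasDerivAt (fun x : ℝ => x ^ (1/θ))
        (1/θ * (l + (1 - l) * u) ^ (1/θ - 1)) (l + (1 - l) * u) :=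
      Real.hasDerivAt_rpow_const (Or.inl (hpos u hu.1).ne')
    exact (houter.comp u hmul).hasDerivWithinAt
  have hinj : InjOn φ (Ioo 0 1) := by
    intro a ha b hb hab
    have : (φ a) ^ θ = (φ b) ^ θ := by rw [hab]
    rw [hφ] at this
    simp only [pow_inv_pow' hθ (hpos a ha.1).le, pow_inv_pow' hθ (hpos b hb.1).le] at this
    have := add_left_cancel this
    exact mul_left_cancel₀ h1l.ne' this
  rw [← himg, MeasureTheory.integral_image_eq_integral_abs_deriv_smul measurableSet_Ioo hderiv hinj,
    ← MeasureTheory.integral_const_mul]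
  refine MeasureTheory.setIntegral_congr_fun measurableSet_Ioo fun u hu => ?_
  have hu0 : 0 < u := hu.1
  have hq : 0 < l + (1 - l) * u := hpos u hu0
  have h1 : (φ u) ^ θ = l + (1 - l) * u := pow_inv_pow' hθ hq.le
  have habs : |ψ u| = ψ u := abs_of_pos (by rw [hψ]; positivity)
  rw [smul_eq_mul, habs, hψ, h1]
  show 1/θ * (l + (1 - l) * u) ^ (1/θ - 1) * (1 - l) * (l + (1 - l) * u - l) ^ p
      = (1 - l) ^ (p + 1) / θ * (u ^ p * (l + (1 - l) * u) ^ (1/θ - 1))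
  rw [show l + (1 - l) * u - l = (1 - l) * u by ring, Real.mul_rpow h1l.le hu0.le,
    Real.rpow_add_one h1l.ne' p]
  ring

private lemma gauss_eval {θ p l : ℝ} (hp : 0 < p) :
    gauss2F1 (1 - 1/θ) 1 (p+2) (1-l)
      = (p+1) * ∫ t in (0:ℝ)..1, (1-t)^p * (1 - (1-l)*t)^(1/θ-1) := by
  rw [gauss2F1]
  have hg : Real.Gamma (p+1) ≠ 0 := (Real.Gamma_pos_of_pos (by linarith)).ne'
  have hb : betaR 1 (p+2-1) = 1/(p+1) := by
    rw [show p+2-1 = p+1 by ring, betaR, Real.Gamma_one, one_mul,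
      show (1:ℝ)+(p+1) = (p+1)+1 by ring,
      Real.Gamma_add_one (by positivity : (p+1 : ℝ) ≠ 0)]
    field_simp
  have hfun : ∀ t : ℝ, t ^ ((1:ℝ)-1) * (1-t)^(p+2-1-1) * (1-(1-l)*t)^(-(1-1/θ))
      = (1-t)^p * (1-(1-l)*t)^(1/θ-1) := fun t => by
    rw [sub_self, Real.rpow_zero, one_mul, show p+2-1-1 = p by ring, neg_sub]
  rw [hb, one_div_one_div]
  simp only [hfun]

end Helpers

theorem stmt19 (θ p l : ℝ) (hθ : 0 < θ) (hp : 1 < p) (hl : l ∈ Set.Ioo (0:ℝ) 1) :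
    (∫ t in (0:ℝ)..1, |t ^ θ - l| ^ p) =
      (l ^ ((θ * p + 1) / θ) / θ) * betaR (1 / θ) (p + 1)
        + ((1 - l) ^ (p + 1) / (θ * (p + 1))) *
            gauss2F1 (1 - 1 / θ) 1 (p + 2) (1 - l) := by
  obtain ⟨hl0, hl1⟩ := hl
  have hppos : (0:ℝ) < p := by linarith
  have h1l : (0:ℝ) < 1 - l := by linarith
  set c := l ^ (1/θ) with hc
  have hc0 : 0 < c := Real.rpow_pos_of_pos hl0 _
  have hc1 : c < 1 := Real.rpow_lt_one hl0.le hl1 (by positivity)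
  -- continuity of the integrand
  have hcont : Continuous fun t : ℝ => |t ^ θ - l| ^ p := by
    have h1 : Continuous fun t : ℝ => t ^ θ := by
      rw [continuous_iff_continuousAt]
      exact fun x => Real.continuousAt_rpow_const x θ (Or.inr hθ.le)
    have h2 : Continuous fun t : ℝ => |t ^ θ - l| := (h1.sub continuous_const).abs
    rw [continuous_iff_continuousAt]
    intro x
    exact (Real.continuousAt_rpow_const _ p (Or.inr hppos.le)).comp h2.continuousAt
  -- split the integral at c
  have hsplit : (∫ t in (0:ℝ)..1, |t ^ θ - l| ^ p)
      = (∫ t in (0:ℝ)..c, |t ^ θ - l| ^ p) + ∫ t in c..1, |t ^ θ - l| ^ p :=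
    (intervalIntegral.integral_add_adjacent_intervals
      (hcont.intervalIntegrable _ _) (hcont.intervalIntegrable _ _)).symm
  -- remove absolute values
  have habs1 : (∫ t in (0:ℝ)..c, |t ^ θ - l| ^ p) = ∫ t in Ioo (0:ℝ) c, (l - t ^ θ) ^ p := by
    rw [intervalIntegral.integral_of_le hc0.le, MeasureTheory.integral_Ioc_eq_integral_Ioo]
    refine MeasureTheory.setIntegral_congr_fun measurableSet_Ioo fun t ht => ?_
    have hlt : t ^ θ < l := by
      calc t ^ θ < c ^ θ := Real.rpow_lt_rpow ht.1.le ht.2 hθ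
        _ = l := pow_inv_pow' hθ hl0.le
    rw [abs_of_neg (by linarith : t ^ θ - l < 0), show -(t ^ θ - l) = l - t ^ θ by ring]
  have habs2 : (∫ t in c..1, |t ^ θ - l| ^ p) = ∫ t in Ioo c 1, (t ^ θ - l) ^ p := by
    rw [intervalIntegral.integral_of_le hc1.le, MeasureTheory.integral_Ioc_eq_integral_Ioo]
    refine MeasureTheory.setIntegral_congr_fun measurableSet_Ioo fun t ht => ?_
    have hlt : l < t ^ θ := by
      calc l = c ^ θ := (pow_inv_pow' hθ hl0.le).symm
        _ < t ^ θ := Real.rpow_lt_rpow hc0.le ht.1 hθ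
    rw [abs_of_pos (by linarith : 0 < t ^ θ - l)]
  -- the beta integral
  have hbeta : betaR (1/θ) (p+1) = ∫ s in Ioo (0:ℝ) 1, s ^ (1/θ - 1) * (1 - s) ^ p := by
    rw [betaR_eq_integral (by positivity) (by linarith : (0:ℝ) < p + 1),
      intervalIntegral.integral_of_le zero_le_one, MeasureTheory.integral_Ioc_eq_integral_Ioo]
    refine MeasureTheory.setIntegral_congr_fun measurableSet_Ioo fun s _ => ?_
    rw [show p + 1 - 1 = p by ring]
  -- the reflection identity
  have hrefl : (∫ u in Ioo (0:ℝ) 1, u ^ p * (l + (1 - l) * u) ^ (1/θ - 1))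
      = ∫ t in (0:ℝ)..1, (1 - t) ^ p * (1 - (1 - l) * t) ^ (1/θ - 1) := by
    have key := intervalIntegral.integral_comp_sub_left (a := (0:ℝ)) (b := 1)
      (fun t => (1 - t) ^ p * (1 - (1 - l) * t) ^ (1/θ - 1)) 1
    norm_num at key
    simp only [one_div]
    rw [← key, intervalIntegral.integral_of_le zero_le_one,
      MeasureTheory.integral_Ioc_eq_integral_Ioo]
    refine MeasureTheory.setIntegral_congr_fun measurableSet_Ioo fun u _ => ?_
    rw [show 1 - (1 - l) * (1 - u) = l + (1 - l) * u by ring]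
  rw [hsplit, habs1, habs2, piece1 hθ hl0, piece2 hθ hl0 hl1, gauss_eval hppos,
    show (θ * p + 1) / θ = 1/θ + p by field_simp; ring, hbeta, hrefl]
  have hp1 : (p:ℝ) + 1 ≠ 0 := by positivity
  field_simp
end
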